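/- arXiv:2209.10456 — 2 statements merged into one kernel-verified Lean document; each statement's English description precedes it below -/
import Mathlib

section
/- Let p be a prime, let P be a nonzero polynomial in d variables over ℚ_p of degree at most l, and let η : ℕ∪{0} → ℕ be a function with η(n+1) ≥ η(n)+1 for all n. Suppose k is the largest integer for which there exists a multi-index β = (i_1,…,i_d) with |β| = k such that |Φ̄_β P(x_1,…,x_d)|_p > p^{−η(k)} for some (x_1,…,x_d) ∈ B(0,1)^{β(1)}, and let β be such a multi-index. Then for every (y_1,…,y_d) ∈ B(0,1)^{β(1)} one has |Φ̄_β P(y_1,…,y_d)|_p > p^{−(η(k)+1)}. -/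
/- Preliminary definitions following Kleinbock–Tomanov and
   Beresnevich–Datta–Ghosh, "Good functions, measures, and the
   Kleinbock-Tomanov conjecture". -/

open scoped BigOperators NNReal ENNReal
open Finset MeasureTheory Metric

namespace KT

variable {p : ℕ} [Fact p.Prime]

/-- Degree `|β|` of a multi-index `β`. -/
def deg {d : ℕ} (β : Fin d → ℕ) : ℕ := ∑ j, β j

/-- The standard multi-index `e_i`. -/
def eI {d : ℕ} (i : Fin d) : Fin d → ℕ := fun j => if j = i then 1 else 0

/-- The raw difference quotient (divided difference) `Φ_β f` of order `β` of a function of `d`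
ultrametric variables, given by the classical divided-difference formula.  On tuples whose
entries are pairwise distinct within each block this agrees with the inductive definition
`Φ_β f = Φ_1^{i_1} ∘ ⋯ ∘ Φ_d^{i_d} f` of Schikhof/Kleinbock–Tomanov. -/
noncomputable def phiB {d : ℕ} (β : Fin d → ℕ) (f : (Fin d → ℚ_[p]) → ℚ_[p])
    (x : (j : Fin d) → Fin (β j + 1) → ℚ_[p]) : ℚ_[p] :=
  ∑ i : (j : Fin d) → Fin (β j + 1),
    f (fun j => x j (i j)) * ∏ j, (∏ m ∈ Finset.univ.erase (i j), (x j (i j) - x j m))⁻¹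

/-- The block domain associated to `U ⊆ ℚ_p^d` and a multi-index `β`:  block tuples, the `j`-th
block having length `β j + 1`, all of whose selections lie in `U`.  For `U = B_1 × ⋯ × B_d` this
is exactly `B_1^{i_1+1} × ⋯ × B_d^{i_d+1}`. -/
def BlockDomain {d : ℕ} (U : Set (Fin d → ℚ_[p])) (β : Fin d → ℕ) :
    Set ((j : Fin d) → Fin (β j + 1) → ℚ_[p]) :=
  {x | ∀ i : (j : Fin d) → Fin (β j + 1), (fun j => x j (i j)) ∈ U}

/-- A block tuple has pairwise distinct entries in each block. -/
def BlockDistinct {d : ℕ} {β : Fin d → ℕ} (x : (j : Fin d) → Fin (β j + 1) → ℚ_[p]) : Prop :=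
  ∀ j, Function.Injective (x j)

/-- `Φb` is "the" continuous extension `Φ̄_β f` of the difference quotient `Φ_β f` on `U`. -/
def IsDQExtOn {d : ℕ} (U : Set (Fin d → ℚ_[p])) (f : (Fin d → ℚ_[p]) → ℚ_[p]) (β : Fin d → ℕ)
    (Φb : ((j : Fin d) → Fin (β j + 1) → ℚ_[p]) → ℚ_[p]) : Prop :=
  ContinuousOn Φb (BlockDomain U β) ∧
    ∀ x ∈ BlockDomain U β, BlockDistinct x → Φb x = phiB β f x

/-- The type of families `β ↦ Φ̄_β f`. -/
abbrev ExtFamily (p d : ℕ) [Fact p.Prime] :=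
  (β : Fin d → ℕ) → ((j : Fin d) → Fin (β j + 1) → ℚ_[p]) → ℚ_[p]

/-- `f` is `C^k` on `U` with difference-quotient extensions `Φb β = Φ̄_β f` for `|β| ≤ k`. -/
def IsCkFamilyOn {d : ℕ} (U : Set (Fin d → ℚ_[p])) (f : (Fin d → ℚ_[p]) → ℚ_[p]) (k : ℕ)
    (Φb : ExtFamily p d) : Prop :=
  ∀ β : Fin d → ℕ, deg β ≤ k → IsDQExtOn U f β (Φb β)

/-- `f` is `C^k` on `U` (difference-quotient sense). -/
def IsCkOn {d : ℕ} (U : Set (Fin d → ℚ_[p])) (f : (Fin d → ℚ_[p]) → ℚ_[p]) (k : ℕ) : Prop :=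
  ∃ Φb : ExtFamily p d, IsCkFamilyOn U f k Φb

/-- The partial derivative `∂_β f (x) = β! Φ̄_β f(x,…,x)` computed from an extension family. -/
noncomputable def pderivF {d : ℕ} (Φb : ExtFamily p d) (β : Fin d → ℕ)
    (x : Fin d → ℚ_[p]) : ℚ_[p] :=
  ((∏ j, Nat.factorial (β j) : ℕ) : ℚ_[p]) * Φb β (fun j _ => x j)

/-- `f = (f_1,…,f_n)` (with extension families `Φb m` for `f_m`) is `l`-nondegenerate at `x`:
the partial derivatives of `f` at `x` of orders `1,…,l` span `ℚ_p^n`. -/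
def NondegAt {d n : ℕ} (Φb : Fin n → ExtFamily p d) (l : ℕ) (x : Fin d → ℚ_[p]) : Prop :=
  Submodule.span ℚ_[p]
    {v : Fin n → ℚ_[p] | ∃ β : Fin d → ℕ, 1 ≤ deg β ∧ deg β ≤ l ∧
      v = fun m => pderivF (Φb m) β x} = ⊤

/-- `f` is nonsingular at `x`: the Jacobian matrix of `f` at `x` has rank `d`, i.e. the `d`
columns `∂_{e_i} f(x)` are linearly independent. -/
def NonsingAt {d n : ℕ} (Φb : Fin n → ExtFamily p d) (x : Fin d → ℚ_[p]) : Prop :=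
  LinearIndependent ℚ_[p] (fun i : Fin d => fun m : Fin n => pderivF (Φb m) (eI i) x)

/-- `sup`-norm of `g` over a set `A`. -/
noncomputable def supNormOn {X : Type*} (g : X → ℚ_[p]) (A : Set X) : ℝ := ⨆ x ∈ A, ‖g x‖

/-- Infimum of `|Φ|` over the block domain of `U`. -/
noncomputable def infBlocks {d : ℕ} (U : Set (Fin d → ℚ_[p])) (β : Fin d → ℕ)
    (Φ : ((j : Fin d) → Fin (β j + 1) → ℚ_[p]) → ℚ_[p]) : ℝ :=
  ⨅ x ∈ BlockDomain U β, ‖Φ x‖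

/-- Supremum of `|Φ|` over the block domain of `U`. -/
noncomputable def supBlocks {d : ℕ} (U : Set (Fin d → ℚ_[p])) (β : Fin d → ℕ)
    (Φ : ((j : Fin d) → Fin (β j + 1) → ℚ_[p]) → ℚ_[p]) : ℝ :=
  ⨆ x ∈ BlockDomain U β, ‖Φ x‖

/-- Given a two-parameter family `Ψ`, the partial derivative `∂_{α₂} f = α₂! Φ̄_{α₂} f(diag)`
computed from `Ψ · 0` (the extension family of `f` itself). -/
noncomputable def pdF {d : ℕ}
    (Ψ : (α₁ : Fin d → ℕ) → (Fin d → ℕ) → ((j : Fin d) → Fin (α₁ j + 1) → ℚ_[p]) → ℚ_[p])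
    (α₂ : Fin d → ℕ) (x : Fin d → ℚ_[p]) : ℚ_[p] :=
  ((∏ j, Nat.factorial (α₂ j) : ℕ) : ℚ_[p]) * Ψ α₂ 0 (fun j _ => x j)

/-- `Ψ α₁ α₂` is the continuous extension `Φ̄_{α₁} ∂_{α₂} f` on `U`, for all relevant orders
(`|α₁| + |α₂| ≤ N`). -/
def IsDerivSystemOn {d : ℕ} (U : Set (Fin d → ℚ_[p])) (f : (Fin d → ℚ_[p]) → ℚ_[p]) (N : ℕ)
    (Ψ : (α₁ : Fin d → ℕ) → (Fin d → ℕ) → ((j : Fin d) → Fin (α₁ j + 1) → ℚ_[p]) → ℚ_[p]) :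
    Prop :=
  (∀ α₁ : Fin d → ℕ, deg α₁ ≤ N → IsDQExtOn U f α₁ (Ψ α₁ 0)) ∧
  (∀ α₁ α₂ : Fin d → ℕ, deg α₁ + deg α₂ ≤ N → IsDQExtOn U (pdF Ψ α₂) α₁ (Ψ α₁ α₂))

/-- The multi-indices `≤ β` (pointwise), as a `Finset`. -/
noncomputable def IicM {d : ℕ} (β : Fin d → ℕ) : Finset (Fin d → ℕ) :=
  Finset.univ.image (fun g : (j : Fin d) → Fin (β j + 1) => fun j => (g j : ℕ))

/-- The `l`-th Taylor polynomial `P_{f,y,l}(x) = Σ_{|β| ≤ l} Φ̄_β f(ȳ_β) Π_j (x_j - y_j)^{β_j}`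
of `f` at `y`, computed from an extension family `Φb` of `f`. -/
noncomputable def taylorP {d : ℕ} (Φb : ExtFamily p d) (y : Fin d → ℚ_[p]) (l : ℕ)
    (x : Fin d → ℚ_[p]) : ℚ_[p] :=
  ∑ β ∈ (IicM (fun _ : Fin d => l)).filter (fun β => deg β ≤ l),
    Φb β (fun j _ => y j) * ∏ j, (x j - y j) ^ β j

/-- The extension family of the linear combination `g = c₀ + Σ_i c_i f_i`, computed from
extension families of the `f_i`. -/
noncomputable def ΦbLin {d n : ℕ} (Φb : Fin n → ExtFamily p d) (c₀ : ℚ_[p])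
    (c : Fin n → ℚ_[p]) : ExtFamily p d :=
  fun β x => (if β = 0 then c₀ else 0) + ∑ i, c i * Φb i β x

/-- Coefficients `(c₀, c)` with `max(|c₀|, max_i |c_i|) = 1`; these parametrize the family
`S_f` of normalized linear combinations `c₀ + Σ c_i f_i`. -/
def UnitCoeffs {n : ℕ} (c₀ : ℚ_[p]) (c : Fin n → ℚ_[p]) : Prop :=
  ‖c₀‖ ≤ 1 ∧ (∀ i, ‖c i‖ ≤ 1) ∧ (‖c₀‖ = 1 ∨ ∃ i, ‖c i‖ = 1)

/-- The extension family of the normalized map `φ(x) = λ⁻¹ g(y + π x)`, computed from an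
extension family of `g`:  `Φ̄_β φ(x) = λ⁻¹ π^{|β|} Φ̄_β g(y + π x)`. -/
noncomputable def Φscale {d : ℕ} (Φg : ExtFamily p d) (lam pi : ℚ_[p]) (y : Fin d → ℚ_[p]) :
    ExtFamily p d :=
  fun β x => lam⁻¹ * pi ^ deg β * Φg β (fun j m => y j + pi * x j m)

/-- Appending `z` at the front of the `i`-th block of a block tuple for `α`, giving a block
tuple for `α + e_i`. -/
def appBlock {d : ℕ} (i : Fin d) (z : ℚ_[p]) (α : Fin d → ℕ)
    (x : (j : Fin d) → Fin (α j + 1) → ℚ_[p]) :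
    (j : Fin d) → Fin ((fun j' => α j' + eI i j') j + 1) → ℚ_[p] :=
  fun j m =>
    if h : j = i then
      (if (m : ℕ) = 0 then z
       else x j ⟨(m : ℕ) - 1, by have hm := m.isLt; subst h; simp [eI] at hm ⊢; omega⟩)
    else x j ⟨(m : ℕ), by have hm := m.isLt; simp [eI, h] at hm ⊢; omega⟩

/-- The block tuple `(a, x)` whose `i`-th block is `(a, x_i)` and whose `j`-th block is `(x_j)`
for `j ≠ i`; so that `f^i_a (x) = Φ̄_{e_i} f (a, x)`. -/
def insBlock {d : ℕ} (i : Fin d) (a : ℚ_[p]) (x : Fin d → ℚ_[p]) :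
    (j : Fin d) → Fin (eI i j + 1) → ℚ_[p] :=
  fun j m => if (m : ℕ) = 0 ∧ j = i then a else x j

/-- The block tuple `(x_1,…,x_j, y_j^{i_j}, y_{j+1}^{i_{j+1}+1},…, y_d^{i_d+1})` appearing in
the ultrametric Taylor formula (for `β` with `β_i = 0` for `i < j`). -/
def mixT {d : ℕ} (jj : Fin d) (x y : Fin d → ℚ_[p]) (β : Fin d → ℕ) :
    (i : Fin d) → Fin (β i + 1) → ℚ_[p] :=
  fun i m => if i < jj then x i else if i = jj then (if (m : ℕ) = 0 then x i else y i) else y i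

/-! ### One-variable difference quotients -/

/-- The raw one-variable difference quotient `Φ^k f` (divided difference). -/
noncomputable def phi1 (f : ℚ_[p] → ℚ_[p]) (k : ℕ) (x : Fin (k + 1) → ℚ_[p]) : ℚ_[p] :=
  ∑ i, f (x i) * (∏ m ∈ Finset.univ.erase i, (x i - x m))⁻¹

/-- `Φ` is the continuous extension `Φ̄^k f` on `U` of the `k`-th difference quotient of a
one-variable function `f`. -/
def IsDQExt1 (U : Set ℚ_[p]) (f : ℚ_[p] → ℚ_[p]) (k : ℕ)
    (Φ : (Fin (k + 1) → ℚ_[p]) → ℚ_[p]) : Prop :=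
  ContinuousOn Φ {x | ∀ m, x m ∈ U} ∧
    ∀ x : Fin (k + 1) → ℚ_[p], (∀ m, x m ∈ U) → Function.Injective x → Φ x = phi1 f k x

/-- The tuple `(x_1,…,x_n,x_n,…,x_{k+1})` with the `n`-th entry doubled. -/
def dup {k : ℕ} (n : Fin (k + 1)) (x : Fin (k + 1) → ℚ_[p]) : Fin (k + 2) → ℚ_[p] :=
  fun m =>
    if h : (m : ℕ) ≤ (n : ℕ) then x ⟨(m : ℕ), by have := n.isLt; omega⟩
    else x ⟨(m : ℕ) - 1, by have := m.isLt; omega⟩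

/-! ### Measures -/

/-- The (topological) support of a measure: the points all of whose neighbourhoods have
positive measure. -/
def msupport {X : Type*} [TopologicalSpace X] [MeasurableSpace X]
    (μ : Measure X) : Set X := {x | ∀ V ∈ nhds x, 0 < μ V}

section Measures

variable [MeasurableSpace ℚ_[p]]

/-- `g` is absolutely `(C,a)`-good on `U` w.r.t. `μ`. -/
def IsAbsGoodOn {d : ℕ} (μ : Measure (Fin d → ℚ_[p])) (U : Set (Fin d → ℚ_[p]))
    (C a : ℝ) (g : (Fin d → ℚ_[p]) → ℚ_[p]) : Prop :=
  ∀ (x₀ : Fin d → ℚ_[p]) (r : ℝ), x₀ ∈ msupport μ → 0 < r → closedBall x₀ r ⊆ U →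
    ∀ ε : ℝ, 0 < ε →
      μ {x ∈ closedBall x₀ r | ‖g x‖ < ε} ≤
        ENNReal.ofReal (C * (ε / supNormOn g (closedBall x₀ r)) ^ a) * μ (closedBall x₀ r)

/-- `g` is `(C,a)`-good on `U` w.r.t. `μ`. -/
def IsGoodOn {d : ℕ} (μ : Measure (Fin d → ℚ_[p])) (U : Set (Fin d → ℚ_[p]))
    (C a : ℝ) (g : (Fin d → ℚ_[p]) → ℚ_[p]) : Prop :=
  ∀ (x₀ : Fin d → ℚ_[p]) (r : ℝ), x₀ ∈ msupport μ → 0 < r → closedBall x₀ r ⊆ U →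
    ∀ ε : ℝ, 0 < ε →
      μ {x ∈ closedBall x₀ r | ‖g x‖ < ε} ≤
        ENNReal.ofReal (C * (ε / supNormOn g (closedBall x₀ r ∩ msupport μ)) ^ a) *
          μ (closedBall x₀ r)

/-- Affine maps `ℚ_p^d → ℚ_p`. -/
def IsAffineMap {d : ℕ} (g : (Fin d → ℚ_[p]) → ℚ_[p]) : Prop :=
  ∃ (c₀ : ℚ_[p]) (c : Fin d → ℚ_[p]), g = fun x => c₀ + ∑ i, c i * x i

/-- `μ` is absolutely `(C,a)`-decaying on `U`. -/
def AbsDecayingOn {d : ℕ} (μ : Measure (Fin d → ℚ_[p])) (U : Set (Fin d → ℚ_[p]))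
    (C a : ℝ) : Prop :=
  ∀ g, IsAffineMap g → IsAbsGoodOn μ U C a g

/-- `μ` is `(C,a)`-decaying on `U`. -/
def DecayingOn {d : ℕ} (μ : Measure (Fin d → ℚ_[p])) (U : Set (Fin d → ℚ_[p]))
    (C a : ℝ) : Prop :=
  ∀ g, IsAffineMap g → IsGoodOn μ U C a g

/-- `μ` is `D`-Federer on `U`. -/
def FedererOn {d : ℕ} (μ : Measure (Fin d → ℚ_[p])) (U : Set (Fin d → ℚ_[p])) (D : ℝ) : Prop :=
  ∀ x ∈ msupport μ, ∀ r : ℝ, 0 < r → closedBall x (3 * r) ⊆ U →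
    μ (closedBall x (3 * r)) < ENNReal.ofReal D * μ (closedBall x r)

/-- `μ` is Federer: `μ`-a.e. point has a neighbourhood on which `μ` is `D`-Federer. -/
def Federer {d : ℕ} (μ : Measure (Fin d → ℚ_[p])) : Prop :=
  ∀ᵐ x ∂μ, ∃ U ∈ nhds x, ∃ D > (0:ℝ), FedererOn μ U D

/-- `μ` is absolutely decaying. -/
def AbsDecaying {d : ℕ} (μ : Measure (Fin d → ℚ_[p])) : Prop :=
  ∀ᵐ x ∂μ, ∃ U ∈ nhds x, ∃ C > (0:ℝ), ∃ a > (0:ℝ), AbsDecayingOn μ U C a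

/-- `μ` is nonplanar: every affine hyperplane is null. -/
def Nonplanar {n : ℕ} (ν : Measure (Fin n → ℚ_[p])) : Prop :=
  ∀ (c : Fin n → ℚ_[p]) (c₀ : ℚ_[p]), c ≠ 0 → ν {x | ∑ i, c i * x i = c₀} = 0

/-- `ν` is friendly: locally finite, nonplanar, and a.e. Federer and decaying. -/
def Friendly {n : ℕ} (ν : Measure (Fin n → ℚ_[p])) : Prop :=
  IsLocallyFiniteMeasure ν ∧ Nonplanar ν ∧
    ∀ᵐ x ∂ν, ∃ U ∈ nhds x, ∃ C > (0:ℝ), ∃ a > (0:ℝ), ∃ D > (0:ℝ),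
      FedererOn ν U D ∧ DecayingOn ν U C a

end Measures

/-! ### Similitudes -/

/-- A contracting similitude with contraction rate `ρ`. -/
def IsSimilitude {n : ℕ} (h : (Fin n → ℚ_[p]) → (Fin n → ℚ_[p])) (ρ : ℝ) : Prop :=
  0 < ρ ∧ ρ < 1 ∧ ∀ x y, dist (h x) (h y) = ρ * dist x y

/-- The open set condition for a finite family of maps. -/
def OpenSetCondition {n m : ℕ} (h : Fin m → (Fin n → ℚ_[p]) → (Fin n → ℚ_[p])) : Prop :=
  ∃ U : Set (Fin n → ℚ_[p]), U.Nonempty ∧ IsOpen U ∧ (∀ i, h i '' U ⊆ U) ∧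
    ∀ i j, i ≠ j → Disjoint (h i '' U) (h j '' U)

/-- The family is irreducible: no finite invariant collection of proper affine subspaces. -/
def IrreducibleFamily {n m : ℕ} (h : Fin m → (Fin n → ℚ_[p]) → (Fin n → ℚ_[p])) : Prop :=
  ¬ ∃ A : Finset (AffineSubspace ℚ_[p] (Fin n → ℚ_[p])),
      A.Nonempty ∧ (∀ L ∈ A, L ≠ ⊤) ∧
      ∀ i, ∀ L ∈ A, ∃ L' ∈ A, h i '' (L : Set (Fin n → ℚ_[p])) ⊆ (L' : Set (Fin n → ℚ_[p]))

end KT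
section Stmt8Aux

open KT Finset Function

variable {p : ℕ} [Fact p.Prime]

lemma erase_prod_ite {n : ℕ} (v : Fin n → ℚ_[p]) (i : Fin n) :
    ∏ m ∈ Finset.univ.erase i, v m = ∏ m, (if m = i then 1 else v m) := by
  rw [← Finset.prod_erase (Finset.univ : Finset (Fin n))
    (f := fun m => if m = i then (1:ℚ_[p]) else v m) (a := i) (if_pos rfl)]
  exact Finset.prod_congr rfl fun m hm => (if_neg (Finset.ne_of_mem_erase hm)).symm

lemma phi1_expand (f : ℚ_[p] → ℚ_[p]) (k : ℕ) (x : Fin (k+1) → ℚ_[p]) :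
    phi1 f k x = ∑ i, f (x i) * (∏ m, (if m = i then 1 else x i - x m))⁻¹ := by
  unfold phi1
  exact Finset.sum_congr rfl fun i _ => by rw [erase_prod_ite]

lemma phi1_perm (f : ℚ_[p] → ℚ_[p]) (k : ℕ) (x : Fin (k+1) → ℚ_[p])
    (τ : Equiv.Perm (Fin (k+1))) :
    phi1 f k (x ∘ τ) = phi1 f k x := by
  rw [phi1_expand, phi1_expand,
    ← Equiv.sum_comp τ (fun i => f (x i) * (∏ m, (if m = i then 1 else x i - x m))⁻¹)]
  refine Finset.sum_congr rfl fun i _ => ?_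
  have : ∏ m, (if m = τ i then (1:ℚ_[p]) else x (τ i) - x m)
      = ∏ m, (if τ m = τ i then (1:ℚ_[p]) else x (τ i) - x (τ m)) :=
    (Equiv.prod_comp τ (fun m => if m = τ i then (1:ℚ_[p]) else x (τ i) - x m)).symm
  simp only [Function.comp, this, EmbeddingLike.apply_eq_iff_eq]

lemma phi1_cast (g : ℚ_[p] → ℚ_[p]) {k k' : ℕ} (h : k = k') (x : Fin (k'+1) → ℚ_[p]) :
    phi1 g k (fun m => x (Fin.cast (by rw [h]) m)) = phi1 g k' x := by
  subst h; rfl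

lemma phi1_step (g : ℚ_[p] → ℚ_[p]) (n : ℕ) (a b : ℚ_[p]) (u : Fin n → ℚ_[p])
    (hinj : Function.Injective (Fin.cons a (Fin.cons b u) : Fin (n+2) → ℚ_[p])) :
    phi1 g n (Fin.cons a u) - phi1 g n (Fin.cons b u)
      = (a - b) * phi1 g (n+1) (Fin.cons a (Fin.cons b u)) := by
  have hzs : ∀ (k : ℕ) (l : Fin k), ((0 : Fin (k+1)) = l.succ) = False :=
    fun k l => eq_false fun h => Fin.succ_ne_zero l h.symm
  have hs1 : ∀ (k : ℕ) (m : Fin k), ((m.succ.succ : Fin (k+2)) = 1) = False :=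
    fun k m => eq_false fun h => by
      rw [← Fin.succ_zero_eq_one] at h
      exact Fin.succ_ne_zero m (Fin.succ_injective _ h)
  have hw := Fin.cons_injective_iff.mp hinj
  have hw2 := Fin.cons_injective_iff.mp hw.2
  have hu : Function.Injective u := hw2.2
  have hab : a ≠ b := by
    intro h; exact hw.1 (by rw [h]; exact ⟨0, (Fin.cons_zero _ _)⟩)
  have hau : ∀ l, a ≠ u l := by
    intro l h; exact hw.1 ⟨l.succ, by rw [Fin.cons_succ]; exact h.symm⟩
  have hbu : ∀ l, b ≠ u l := by
    intro l h; exact hw2.1 ⟨l, h.symm⟩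
  have hab0 : a - b ≠ 0 := sub_ne_zero.mpr hab
  have hba0 : b - a ≠ 0 := sub_ne_zero.mpr (Ne.symm hab)
  have hau0 : ∀ l, u l - a ≠ 0 := fun l => sub_ne_zero.mpr fun h => hau l h.symm
  have hbu0 : ∀ l, u l - b ≠ 0 := fun l => sub_ne_zero.mpr fun h => hbu l h.symm
  have hQa0 : (∏ m, (a - u m)) ≠ 0 :=
    Finset.prod_ne_zero_iff.mpr fun m _ => sub_ne_zero.mpr (hau m)
  have hQb0 : (∏ m, (b - u m)) ≠ 0 :=
    Finset.prod_ne_zero_iff.mpr fun m _ => sub_ne_zero.mpr (hbu m)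
  have hR0 : ∀ l, (∏ m, (if m = l then (1:ℚ_[p]) else u l - u m)) ≠ 0 := by
    intro l
    refine Finset.prod_ne_zero_iff.mpr fun m _ => ?_
    by_cases h : m = l
    · simp [h]
    · rw [if_neg h]; exact sub_ne_zero.mpr fun e => h (hu e).symm
  have expA : phi1 g n (Fin.cons a u)
      = g a * (∏ m, (a - u m))⁻¹
        + ∑ l, g (u l) * ((u l - a) * ∏ m, (if m = l then (1:ℚ_[p]) else u l - u m))⁻¹ := by
    rw [phi1_expand, Fin.sum_univ_succ]
    simp [Fin.prod_univ_succ, Fin.succ_inj, hzs, Fin.succ_ne_zero]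
  have expB : phi1 g n (Fin.cons b u)
      = g b * (∏ m, (b - u m))⁻¹
        + ∑ l, g (u l) * ((u l - b) * ∏ m, (if m = l then (1:ℚ_[p]) else u l - u m))⁻¹ := by
    rw [phi1_expand, Fin.sum_univ_succ]
    simp [Fin.prod_univ_succ, Fin.succ_inj, hzs, Fin.succ_ne_zero]
  have expW : phi1 g (n+1) (Fin.cons a (Fin.cons b u))
      = g a * ((a - b) * ∏ m, (a - u m))⁻¹
        + (g b * ((b - a) * ∏ m, (b - u m))⁻¹
          + ∑ l, g (u l)
              * ((u l - a) * ((u l - b) * ∏ m, (if m = l then (1:ℚ_[p]) else u l - u m)))⁻¹) := by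
    rw [phi1_expand, Fin.sum_univ_succ, Fin.sum_univ_succ]
    simp [Fin.prod_univ_succ, Fin.succ_inj, hzs, hs1, Fin.succ_ne_zero]
  rw [expA, expB, expW, mul_add, mul_add, Finset.mul_sum]
  have h1 : g a * (∏ m, (a - u m))⁻¹ = (a - b) * (g a * ((a - b) * ∏ m, (a - u m))⁻¹) := by
    field_simp
  have h2 : -(g b * (∏ m, (b - u m))⁻¹)
      = (a - b) * (g b * ((b - a) * ∏ m, (b - u m))⁻¹) := by
    field_simp
    ring
  have hsum : (∑ l, g (u l) * ((u l - a) * ∏ m, (if m = l then (1:ℚ_[p]) else u l - u m))⁻¹)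
        - ∑ l, g (u l) * ((u l - b) * ∏ m, (if m = l then (1:ℚ_[p]) else u l - u m))⁻¹
      = ∑ l, (a - b) * (g (u l)
          * ((u l - a) * ((u l - b) * ∏ m, (if m = l then (1:ℚ_[p]) else u l - u m)))⁻¹) := by
    rw [← Finset.sum_sub_distrib]
    refine Finset.sum_congr rfl fun l _ => ?_
    have h1l := hau0 l
    have h2l := hbu0 l
    have h3l := hR0 l
    field_simp
    ring
  linear_combination h1 + h2 + hsum

lemma phi1_update (g : ℚ_[p] → ℚ_[p]) (n : ℕ) (x : Fin (n+1) → ℚ_[p])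
    (hx : Function.Injective x) (m₀ : Fin (n+1)) (b : ℚ_[p]) (hb : ∀ l, b ≠ x l) :
    phi1 g n x - phi1 g n (Function.update x m₀ b)
      = (x m₀ - b) * phi1 g (n+1)
          (Fin.cons (x m₀) (Fin.cons b (fun l => x (m₀.succAbove l)))) := by
  set u : Fin n → ℚ_[p] := fun l => x (m₀.succAbove l) with hu
  set τ : Equiv.Perm (Fin (n+1)) :=
    (finSuccEquiv' (0 : Fin (n+1))).trans (finSuccEquiv' m₀).symm with hτ
  have hτ0 : τ 0 = m₀ := by
    simp [hτ, finSuccEquiv'_at, finSuccEquiv'_symm_none]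
  have hτs : ∀ l : Fin n, τ l.succ = m₀.succAbove l := by
    intro l
    have h1 : (finSuccEquiv' (0 : Fin (n+1))) l.succ = some l := by
      have := finSuccEquiv'_succAbove (0 : Fin (n+1)) l
      rwa [Fin.succAbove_zero] at this
    simp [hτ, h1]
  have hxτ : x ∘ τ = Fin.cons (x m₀) u := by
    funext i
    refine Fin.cases ?_ (fun l => ?_) i
    · simp only [Function.comp_apply, Fin.cons_zero]
      rw [hτ0]
    · simp only [Function.comp_apply, Fin.cons_succ]
      rw [hτs]
  have hyτ : (Function.update x m₀ b) ∘ τ = Fin.cons b u := by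
    funext i
    refine Fin.cases ?_ (fun l => ?_) i
    · simp only [Function.comp_apply, Fin.cons_zero]
      rw [hτ0, Function.update_self]
    · simp only [Function.comp_apply, Fin.cons_succ]
      rw [hτs, Function.update_of_ne (Fin.succAbove_ne m₀ l)]
  have hinj : Function.Injective (Fin.cons (x m₀) (Fin.cons b u) : Fin (n+2) → ℚ_[p]) := by
    rw [Fin.cons_injective_iff]
    constructor
    · rintro ⟨i, hi⟩
      revert hi
      refine Fin.cases ?_ (fun l => ?_) i
      · intro h; rw [Fin.cons_zero] at h; exact hb m₀ h
      · intro h; rw [Fin.cons_succ] at h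
        exact Fin.succAbove_ne m₀ l (hx h)
    · rw [Fin.cons_injective_iff]
      refine ⟨?_, fun l l' h => ?_⟩
      · rintro ⟨l, hl⟩; exact hb _ hl.symm
      · exact Fin.succAbove_right_injective (hx h)
  rw [← phi1_perm g n x τ, ← phi1_perm g n (Function.update x m₀ b) τ, hxτ, hyτ]
  exact phi1_step g n (x m₀) b u hinj

lemma phi1_cast' (g : ℚ_[p] → ℚ_[p]) {k k' : ℕ} (h2 : k + 1 = k' + 1)
    (x : Fin (k'+1) → ℚ_[p]) :
    phi1 g k (fun m => x (Fin.cast h2 m)) = phi1 g k' x := by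
  have h : k = k' := Nat.succ_injective h2
  subst h; rfl

lemma erase_prod_cast {n n' : ℕ} (h : n = n') (v : Fin n' → ℚ_[p]) (i : Fin n) :
    ∏ m ∈ Finset.univ.erase i, v (Fin.cast h m)
      = ∏ m' ∈ Finset.univ.erase (Fin.cast h i), v m' := by
  subst h; rfl

variable {d : ℕ}

/-- Off-block partial divided difference, used to factor `phiB` through `phi1`. -/
noncomputable def gOff (f : (Fin d → ℚ_[p]) → ℚ_[p]) (j₀ : Fin d) (β : Fin d → ℕ)
    (z : (j : Fin d) → Fin (β j + 1) → ℚ_[p]) (t : ℚ_[p]) : ℚ_[p] :=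
  ∑ i : ((j : {j : Fin d // j ≠ j₀}) → Fin (β j.1 + 1)),
    f (fun j => if h : j = j₀ then t else z j (i ⟨j, h⟩))
      * ∏ j : {j : Fin d // j ≠ j₀},
          (∏ m ∈ Finset.univ.erase (i j), (z j.1 (i j) - z j.1 m))⁻¹

lemma phiB_factor (f : (Fin d → ℚ_[p]) → ℚ_[p]) (β : Fin d → ℕ)
    (z : (j : Fin d) → Fin (β j + 1) → ℚ_[p]) (j₀ : Fin d) :
    phiB β f z = phi1 (gOff f j₀ β z) (β j₀) (z j₀) := by
  refine Eq.trans (Fintype.sum_bijective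
    (fun (i : (j : Fin d) → Fin (β j + 1)) =>
      ((i j₀, fun j : {j : Fin d // j ≠ j₀} => i j.1) :
        Fin (β j₀ + 1) × ((j : {j : Fin d // j ≠ j₀}) → Fin (β j.1 + 1))))
    ?_ _
    (fun q =>
      (f (fun j => if h : j = j₀ then z j₀ q.1 else z j (q.2 ⟨j, h⟩))
        * ∏ j : {j : Fin d // j ≠ j₀},
            (∏ m ∈ Finset.univ.erase (q.2 j), (z j.1 (q.2 j) - z j.1 m))⁻¹)
        * (∏ m ∈ Finset.univ.erase q.1, (z j₀ q.1 - z j₀ m))⁻¹)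
    ?_) ?_
  · constructor
    · intro i i' h
      funext j
      by_cases hj : j = j₀
      · subst hj; exact congrArg Prod.fst h
      · exact congrFun (congrArg Prod.snd h) ⟨j, hj⟩
    · rintro ⟨m, i'⟩
      refine ⟨fun j => if h : j = j₀ then Fin.cast (by rw [h]) m else i' ⟨j, h⟩, ?_⟩
      refine Prod.ext ?_ ?_
      · simp
      · funext j
        simp [j.2]
  · intro i
    have harg : (fun j => z j (i j))
        = fun j => if h : j = j₀ then z j₀ (i j₀) else z j (i j) := by
      funext j
      by_cases h : j = j₀
      · subst h; simp
      · simp [h]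
    have hprod : (∏ j, (∏ m ∈ Finset.univ.erase (i j), (z j (i j) - z j m))⁻¹)
        = (∏ j : {j : Fin d // j ≠ j₀},
            (∏ m ∈ Finset.univ.erase (i j.1), (z j.1 (i j.1) - z j.1 m))⁻¹)
          * (∏ m ∈ Finset.univ.erase (i j₀), (z j₀ (i j₀) - z j₀ m))⁻¹ := by
      rw [← Finset.mul_prod_erase Finset.univ _ (Finset.mem_univ j₀), mul_comm]
      congr 1
      exact Finset.prod_subtype (Finset.univ.erase j₀) (by simp) _
    show f (fun j => z j (i j)) * _ = _
    rw [harg, hprod, ← mul_assoc]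
  · rw [Fintype.sum_prod_type]
    unfold phi1 gOff
    refine Finset.sum_congr rfl fun m _ => ?_
    rw [Finset.sum_mul]

lemma gOff_update (f : (Fin d → ℚ_[p]) → ℚ_[p]) (j₀ : Fin d) (β : Fin d → ℕ)
    (z : (j : Fin d) → Fin (β j + 1) → ℚ_[p]) (v : Fin (β j₀ + 1) → ℚ_[p]) :
    gOff f j₀ β (Function.update z j₀ v) = gOff f j₀ β z := by
  funext t
  unfold gOff
  refine Finset.sum_congr rfl fun i _ => ?_
  congr 1
  · congr 1
    funext j
    by_cases h : j = j₀
    · simp [h]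
    · simp only [dif_neg h]
      rw [Function.update_of_ne h]
  · refine Finset.prod_congr rfl fun j _ => ?_
    rw [Function.update_of_ne j.2]

lemma gOff_cast (f : (Fin d → ℚ_[p]) → ℚ_[p]) (j₀ : Fin d) {β γ : Fin d → ℕ}
    (hβγ : ∀ j, j ≠ j₀ → β j = γ j)
    (z : (j : Fin d) → Fin (β j + 1) → ℚ_[p]) (Z : (j : Fin d) → Fin (γ j + 1) → ℚ_[p])
    (hzZ : ∀ j (h : j ≠ j₀) (m : Fin (β j + 1)), z j m = Z j (Fin.cast (by rw [hβγ j h]) m)) :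
    gOff f j₀ β z = gOff f j₀ γ Z := by
  funext t
  unfold gOff
  refine Fintype.sum_bijective
    (fun i (j : {j : Fin d // j ≠ j₀}) => Fin.cast (by rw [hβγ j.1 j.2]) (i j)) ?_ _ _ ?_
  · constructor
    · intro i i' h
      funext j
      have h2 := congrFun h j
      have h3 := congrArg Fin.val h2
      exact Fin.ext h3
    · intro i'
      refine ⟨fun j => Fin.cast (by rw [hβγ j.1 j.2]) (i' j), ?_⟩
      funext j
      exact Fin.ext rfl
  · intro i
    congr 1
    · congr 1
      funext j
      by_cases h : j = j₀
      · simp [h]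
      · simp only [dif_neg h]
        exact hzZ j h (i ⟨j, h⟩)
    · refine Finset.prod_congr rfl fun j _ => ?_
      congr 1
      have hn : β j.1 + 1 = γ j.1 + 1 := by rw [hβγ j.1 j.2]
      calc ∏ m ∈ Finset.univ.erase (i j), (z j.1 (i j) - z j.1 m)
          = ∏ m ∈ Finset.univ.erase (i j),
              (Z j.1 (Fin.cast hn (i j)) - Z j.1 (Fin.cast hn m)) := by
            refine Finset.prod_congr rfl fun m _ => ?_
            rw [hzZ j.1 j.2 (i j), hzZ j.1 j.2 m]
        _ = ∏ m' ∈ Finset.univ.erase (Fin.cast hn (i j)),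
              (Z j.1 (Fin.cast hn (i j)) - Z j.1 m') :=
            erase_prod_cast hn (fun m' => Z j.1 (Fin.cast hn (i j)) - Z j.1 m') (i j)

/-- The multi-index `β` with the `j₀`-entry increased by one. -/
def bump (β : Fin d → ℕ) (j₀ : Fin d) : Fin d → ℕ := fun j => if j = j₀ then β j₀ + 1 else β j

lemma bump_self (β : Fin d → ℕ) (j₀ : Fin d) : bump β j₀ j₀ = β j₀ + 1 := if_pos rfl

lemma bump_ne (β : Fin d → ℕ) {j j₀ : Fin d} (h : j ≠ j₀) : bump β j₀ j = β j := if_neg h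

lemma deg_bump (β : Fin d → ℕ) (j₀ : Fin d) : deg (bump β j₀) = deg β + 1 := by
  unfold KT.deg bump
  have h : ∀ j, (if j = j₀ then β j₀ + 1 else β j) = β j + (if j = j₀ then 1 else 0) := by
    intro j; by_cases h : j = j₀ <;> simp [h]
  simp only [h]
  rw [Finset.sum_add_distrib, Finset.sum_ite_eq' Finset.univ j₀ (fun _ => 1)]
  simp

/-- The extended block tuple, with `b` inserted into block `j₀` and the `m₀`-entry moved
to the front. -/
noncomputable def extT (β : Fin d → ℕ) (j₀ : Fin d) (m₀ : Fin (β j₀ + 1)) (b : ℚ_[p])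
    (z : (j : Fin d) → Fin (β j + 1) → ℚ_[p]) :
    (j : Fin d) → Fin (bump β j₀ j + 1) → ℚ_[p] :=
  fun j m =>
    if h : j = j₀ then
      (Fin.cons (z j₀ m₀) (Fin.cons b (fun l => z j₀ (m₀.succAbove l)))
          : Fin (β j₀ + 1 + 1) → ℚ_[p])
        (Fin.cast (by rw [h, bump_self]) m)
    else z j (Fin.cast (by rw [bump_ne β h]) m)

lemma phiB_single_change (f : (Fin d → ℚ_[p]) → ℚ_[p]) (β : Fin d → ℕ)
    (z : (j : Fin d) → Fin (β j + 1) → ℚ_[p]) (hzd : BlockDistinct z)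
    (j₀ : Fin d) (m₀ : Fin (β j₀ + 1)) (b : ℚ_[p]) (hb : ∀ m, b ≠ z j₀ m) :
    phiB β f z - phiB β f (Function.update z j₀ (Function.update (z j₀) m₀ b))
      = (z j₀ m₀ - b) * phiB (bump β j₀) f (extT β j₀ m₀ b z) := by
  have hcast : bump β j₀ j₀ + 1 = β j₀ + 1 + 1 := by rw [bump_self]
  set bigz : Fin (β j₀ + 1 + 1) → ℚ_[p] :=
    Fin.cons (z j₀ m₀) (Fin.cons b (fun l => z j₀ (m₀.succAbove l))) with hbigz
  rw [phiB_factor f β z j₀, phiB_factor f β _ j₀, phiB_factor f (bump β j₀) _ j₀,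
    gOff_update, Function.update_self]
  have hg : gOff f j₀ β z = gOff f j₀ (bump β j₀) (extT β j₀ m₀ b z) := by
    refine gOff_cast f j₀ (fun j h => (bump_ne β h).symm) z (extT β j₀ m₀ b z) ?_
    intro j h m
    show z j m = extT β j₀ m₀ b z j _
    have : extT β j₀ m₀ b z j = fun m' => z j (Fin.cast (by rw [bump_ne β h]) m') := by
      funext m'
      simp only [extT]
      exact dif_neg h
    rw [this]
    exact congrArg (z j) (Fin.ext rfl)
  have hx : extT β j₀ m₀ b z j₀ = fun m => bigz (Fin.cast hcast m) := by
    funext m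
    simp only [extT]
    rw [dif_pos trivial]
  rw [← hg, hx, phi1_cast' (gOff f j₀ β z) hcast bigz]
  exact phi1_update (gOff f j₀ β z) (β j₀) (z j₀) (hzd j₀) m₀ b fun l => hb l

lemma mem_unitBlockDomain_iff {β : Fin d → ℕ} (x : (j : Fin d) → Fin (β j + 1) → ℚ_[p]) :
    x ∈ BlockDomain {y : Fin d → ℚ_[p] | ∀ j, ‖y j‖ ≤ 1} β ↔ ∀ j m, ‖x j m‖ ≤ 1 := by
  constructor
  · intro hx j m
    have := hx (fun j' => if h : j' = j then Fin.cast (by rw [h]) m else 0) j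
    simpa using this
  · intro hx i j
    exact hx j (i j)

lemma infinite_near (z : ℚ_[p]) (hz : ‖z‖ ≤ 1) (ε : ℝ) (hε : 0 < ε) :
    {t : ℚ_[p] | ‖t‖ ≤ 1 ∧ ‖t - z‖ < ε}.Infinite := by
  have hp1 : (1:ℝ) < p := by exact_mod_cast (Fact.out : p.Prime).one_lt
  set r : ℝ := (p : ℝ)⁻¹ with hr
  have hr0 : 0 < r := inv_pos.mpr (lt_trans one_pos hp1)
  have hr1 : r < 1 := inv_lt_one_of_one_lt₀ hp1
  obtain ⟨M, hM⟩ := exists_pow_lt_of_lt_one hε hr1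
  have hnorm : ∀ n : ℕ, ‖((p : ℚ_[p]) ^ (M + n))‖ = r ^ (M + n) := by
    intro n
    rw [norm_pow, Padic.norm_p]
  refine Set.infinite_of_injective_forall_mem
    (f := fun n : ℕ => z + (p : ℚ_[p]) ^ (M + n)) ?_ ?_
  · intro a b hab
    have h1 : (p : ℚ_[p]) ^ (M + a) = (p : ℚ_[p]) ^ (M + b) := by
      have := hab
      simpa using this
    have h2 : r ^ (M + a) = r ^ (M + b) := by
      rw [← hnorm a, ← hnorm b, h1]
    have hinj : Function.Injective (fun n : ℕ => r ^ n) := by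
      intro a b hab
      rcases lt_trichotomy a b with h | h | h
      · exact absurd hab (ne_of_gt (pow_lt_pow_right_of_lt_one₀ hr0 hr1 h))
      · exact h
      · exact absurd hab (ne_of_lt (pow_lt_pow_right_of_lt_one₀ hr0 hr1 h))
    have := hinj h2
    omega
  · intro n
    have hle1 : ‖((p : ℚ_[p]) ^ (M + n))‖ ≤ 1 := by
      rw [hnorm]
      exact pow_le_one₀ (le_of_lt hr0) (le_of_lt hr1)
    constructor
    · refine le_trans (Padic.nonarchimedean z _) ?_
      exact max_le hz hle1
    · have : z + (p : ℚ_[p]) ^ (M + n) - z = (p : ℚ_[p]) ^ (M + n) := by ring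
      rw [this, hnorm]
      refine lt_of_le_of_lt ?_ hM
      exact pow_le_pow_of_le_one (le_of_lt hr0) (le_of_lt hr1) (Nat.le_add_right M n)

lemma exists_inj_approx : ∀ (n : ℕ) (z : Fin n → ℚ_[p]), (∀ i, ‖z i‖ ≤ 1) → ∀ ε : ℝ, 0 < ε →
    ∃ w : Fin n → ℚ_[p], Function.Injective w ∧ ∀ i, ‖w i‖ ≤ 1 ∧ ‖w i - z i‖ < ε := by
  intro n
  induction n with
  | zero =>
    intro z _ ε hε
    exact ⟨fun i => i.elim0, fun i => i.elim0, fun i => i.elim0⟩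
  | succ n ih =>
    intro z hz ε hε
    obtain ⟨w', hw'inj, hw'⟩ := ih (fun l => z l.succ) (fun l => hz l.succ) ε hε
    obtain ⟨v, hv⟩ := ((infinite_near (z 0) (hz 0) ε hε).diff (Set.finite_range w')).nonempty
    refine ⟨Fin.cons v w', ?_, ?_⟩
    · rw [Fin.cons_injective_iff]
      exact ⟨hv.2, hw'inj⟩
    · intro i
      refine Fin.cases ?_ (fun l => ?_) i
      · simpa using hv.1
      · simpa using hw' l

lemma exists_inj_approx' {I : Type} [Fintype I] (z : I → ℚ_[p]) (hz : ∀ i, ‖z i‖ ≤ 1)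
    (ε : ℝ) (hε : 0 < ε) :
    ∃ w : I → ℚ_[p], Function.Injective w ∧ ∀ i, ‖w i‖ ≤ 1 ∧ ‖w i - z i‖ < ε := by
  set e := Fintype.equivFin I with he
  obtain ⟨w, hinj, hw⟩ :=
    exists_inj_approx (Fintype.card I) (z ∘ e.symm) (fun i => hz _) ε hε
  refine ⟨w ∘ e, hinj.comp e.injective, fun i => ?_⟩
  simpa using hw (e i)

end Stmt8Aux

open KT MeasureTheory Metric in
/-- Lemma 6.1, `poly_maximal`.  Let `P ≠ 0` be a polynomial of degree `≤ l`
in `d` variables over `ℚ_p` and `η : ℕ → ℕ` with `η(n+1) ≥ η(n) + 1`.  If `k` is the largest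
integer such that `|Φ̄_β P(x)| > p^{-η(k)}` for some `β` with `|β| = k` and some
`x ∈ B(0,1)^{β(1)}`, witnessed by `β`, then `|Φ̄_β P(y)| > p^{-(η(k)+1)}` for every
`y ∈ B(0,1)^{β(1)}`. -/
theorem stmt8 {p : ℕ} [Fact p.Prime] {d l : ℕ}
    (Zd : Set (Fin d → ℚ_[p])) (hZd : Zd = {x | ∀ j, ‖x j‖ ≤ 1})
    (P : MvPolynomial (Fin d) ℚ_[p]) (hP : P ≠ 0) (hdeg : P.totalDegree ≤ l)
    (η : ℕ → ℕ) (hη : ∀ nn, η nn + 1 ≤ η (nn + 1))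
    (Φb : ExtFamily p d)
    (hΦb : ∀ β : Fin d → ℕ, IsDQExtOn Zd (fun x => MvPolynomial.eval x P) β (Φb β))
    (k : ℕ) (β : Fin d → ℕ) (hβk : deg β = k)
    (hwit : ∃ x ∈ BlockDomain Zd β, (p : ℝ) ^ (-(η k : ℤ)) < ‖Φb β x‖)
    (hmax : ∀ k' : ℕ, k < k' → ∀ γ : Fin d → ℕ, deg γ = k' →
      ∀ x ∈ BlockDomain Zd γ, ‖Φb γ x‖ ≤ (p : ℝ) ^ (-(η k' : ℤ))) :
    ∀ y ∈ BlockDomain Zd β, (p : ℝ) ^ (-(η k : ℤ) - 1) < ‖Φb β y‖ := by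
  subst hZd
  have hp1 : (1:ℝ) < p := by exact_mod_cast (Fact.out : p.Prime).one_lt
  set C : ℝ := (p : ℝ) ^ (-(η (k+1) : ℤ)) with hCdef
  have hC0 : 0 < C := zpow_pos (lt_trans one_pos hp1) _
  -- Step 1: single entry change bound on distinct tuples
  have step1 : ∀ z : (j : Fin d) → Fin (β j + 1) → ℚ_[p], (∀ j m, ‖z j m‖ ≤ 1) →
      BlockDistinct z → ∀ (j₀ : Fin d) (m₀ : Fin (β j₀ + 1)) (b : ℚ_[p]), ‖b‖ ≤ 1 →
      (∀ m, b ≠ z j₀ m) →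
      ‖Φb β z - Φb β (Function.update z j₀ (Function.update (z j₀) m₀ b))‖ ≤ C := by
    intro z hz hzd j₀ m₀ b hbnorm hb
    set z' := Function.update z j₀ (Function.update (z j₀) m₀ b) with hz'def
    have hz' : ∀ j m, ‖z' j m‖ ≤ 1 := by
      intro j m
      by_cases hj : j = j₀
      · subst hj
        rw [hz'def, Function.update_self]
        by_cases hm : m = m₀
        · subst hm; rw [Function.update_self]; exact hbnorm
        · rw [Function.update_of_ne hm]; exact hz _ _
      · rw [hz'def, Function.update_of_ne hj]; exact hz _ _
    have hz'd : BlockDistinct z' := by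
      intro j
      by_cases hj : j = j₀
      · subst hj
        rw [hz'def, Function.update_self]
        intro m m' he
        by_cases hm : m = m₀ <;> by_cases hm' : m' = m₀
        · rw [hm, hm']
        · subst hm; rw [Function.update_self, Function.update_of_ne hm'] at he
          exact absurd he.symm ((hb m').symm)
        · subst hm'; rw [Function.update_self, Function.update_of_ne hm] at he
          exact absurd he ((hb m).symm)
        · rw [Function.update_of_ne hm, Function.update_of_ne hm'] at he
          exact hzd _ he
      · rw [hz'def, Function.update_of_ne hj]; exact hzd j
    have hcast : bump β j₀ j₀ + 1 = β j₀ + 1 + 1 := by rw [bump_self]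
    set bigz : Fin (β j₀ + 1 + 1) → ℚ_[p] :=
      Fin.cons (z j₀ m₀) (Fin.cons b (fun l => z j₀ (m₀.succAbove l))) with hbigz
    have hET0 : extT β j₀ m₀ b z j₀ = fun m => bigz (Fin.cast hcast m) := by
      funext m
      simp only [extT]
      rw [dif_pos trivial]
    have hETne : ∀ (j : Fin d) (hj : j ≠ j₀), extT β j₀ m₀ b z j
        = fun m => z j (Fin.cast (by rw [bump_ne β hj]) m) := by
      intro j hj
      funext m
      simp only [extT]
      rw [dif_neg hj]
    have hbig : ∀ m' : Fin (β j₀ + 1 + 1), ‖bigz m'‖ ≤ 1 := by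
      intro m'
      refine Fin.cases ?_ (fun l => ?_) m'
      · rw [hbigz, Fin.cons_zero]; exact hz _ _
      · rw [hbigz, Fin.cons_succ]
        refine Fin.cases ?_ (fun l' => ?_) l
        · rw [Fin.cons_zero]; exact hbnorm
        · rw [Fin.cons_succ]; exact hz _ _
    have hbiginj : Function.Injective bigz := by
      rw [hbigz, Fin.cons_injective_iff]
      constructor
      · rintro ⟨i, hi⟩
        revert hi
        refine Fin.cases ?_ (fun l => ?_) i
        · intro h; rw [Fin.cons_zero] at h; exact hb m₀ h
        · intro h; rw [Fin.cons_succ] at h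
          exact Fin.succAbove_ne m₀ l (hzd j₀ h)
      · rw [Fin.cons_injective_iff]
        refine ⟨?_, fun l l' h => ?_⟩
        · rintro ⟨l, hl⟩; exact hb _ hl.symm
        · exact Fin.succAbove_right_injective (hzd j₀ h)
    have hXz : ∀ j m, ‖extT β j₀ m₀ b z j m‖ ≤ 1 := by
      intro j m
      by_cases hj : j = j₀
      · subst hj; rw [hET0]; exact hbig _
      · rw [hETne j hj]; exact hz _ _
    have hXd : BlockDistinct (extT β j₀ m₀ b z) := by
      intro j
      by_cases hj : j = j₀
      · subst hj
        rw [hET0]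
        intro m m' he
        have h2 := hbiginj he
        have h3 := congrArg Fin.val h2
        exact Fin.ext h3
      · rw [hETne j hj]
        intro m m' he
        have h2 := hzd j he
        have h3 := congrArg Fin.val h2
        exact Fin.ext h3
    have hXmem := (mem_unitBlockDomain_iff (extT β j₀ m₀ b z)).mpr hXz
    have hzmem := (mem_unitBlockDomain_iff z).mpr hz
    have hz'mem := (mem_unitBlockDomain_iff z').mpr hz'
    have hid := phiB_single_change (fun v => MvPolynomial.eval v P) β z hzd j₀ m₀ b hb
    rw [← hz'def] at hid
    have hΦz := (hΦb β).2 z hzmem hzd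
    have hΦz' := (hΦb β).2 z' hz'mem hz'd
    have hΦX := (hΦb (bump β j₀)).2 (extT β j₀ m₀ b z) hXmem hXd
    have hdγ : deg (bump β j₀) = k + 1 := by rw [deg_bump, hβk]
    have hmaxX := hmax (k+1) (Nat.lt_succ_self k) (bump β j₀) hdγ (extT β j₀ m₀ b z) hXmem
    rw [hΦX] at hmaxX
    have hab1 : ‖z j₀ m₀ - b‖ ≤ 1 := by
      rw [sub_eq_add_neg]
      refine le_trans (Padic.nonarchimedean _ _) ?_
      rw [norm_neg]
      exact max_le (hz _ _) hbnorm
    calc ‖Φb β z - Φb β z'‖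
        = ‖phiB β (fun v => MvPolynomial.eval v P) z
            - phiB β (fun v => MvPolynomial.eval v P) z'‖ := by rw [hΦz, hΦz']
      _ = ‖z j₀ m₀ - b‖
            * ‖phiB (bump β j₀) (fun v => MvPolynomial.eval v P) (extT β j₀ m₀ b z)‖ := by
          rw [hid, norm_mul]
      _ ≤ 1 * C := by
          refine mul_le_mul hab1 ?_ (norm_nonneg _) zero_le_one
          exact hmaxX
      _ = C := one_mul C
  -- Step 2: telescoping over all entries
  have tele : ∀ x y' : (j : Fin d) → Fin (β j + 1) → ℚ_[p],
      (∀ j m, ‖x j m‖ ≤ 1) → (∀ j m, ‖y' j m‖ ≤ 1) →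
      (∀ j, Function.Injective (x j)) → (∀ j, Function.Injective (y' j)) →
      (∀ j m m', x j m ≠ y' j m') →
      ‖Φb β x - Φb β y'‖ ≤ C := by
    intro x y' hx hy' hxinj hyinj hcross
    have main : ∀ S : Finset ((j : Fin d) × Fin (β j + 1)),
        ‖Φb β (fun j m => if (⟨j, m⟩ : (j : Fin d) × Fin (β j + 1)) ∈ S then y' j m else x j m)
          - Φb β x‖ ≤ C := by
      intro S
      induction S using Finset.induction_on with
      | empty =>
        have hmix : (fun j m =>
            if (⟨j, m⟩ : (j : Fin d) × Fin (β j + 1)) ∈ (∅ : Finset ((j : Fin d) × Fin (β j + 1)))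
            then y' j m else x j m) = x := by
          funext j m; simp
        rw [hmix, sub_self, norm_zero]
        exact le_of_lt hC0
      | @insert a S ha ih =>
        obtain ⟨a1, a2⟩ := a
        set mS : (j : Fin d) → Fin (β j + 1) → ℚ_[p] :=
          fun j m => if (⟨j, m⟩ : (j : Fin d) × Fin (β j + 1)) ∈ S then y' j m else x j m
          with hmS
        have hmem : ∀ j m, ‖mS j m‖ ≤ 1 := by
          intro j m
          rw [hmS]
          dsimp only
          split
          · exact hy' j m
          · exact hx j m
        have hdist : BlockDistinct mS := by
          intro j m m' he
          rw [hmS] at he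
          dsimp only at he
          by_cases h1 : (⟨j, m⟩ : (j : Fin d) × Fin (β j + 1)) ∈ S <;>
            by_cases h2 : (⟨j, m'⟩ : (j : Fin d) × Fin (β j + 1)) ∈ S
          · rw [if_pos h1, if_pos h2] at he; exact hyinj j he
          · rw [if_pos h1, if_neg h2] at he; exact absurd he.symm (hcross j m' m)
          · rw [if_neg h1, if_pos h2] at he; exact absurd he (hcross j m m')
          · rw [if_neg h1, if_neg h2] at he; exact hxinj j he
        have hbne : ∀ m, y' a1 a2 ≠ mS a1 m := by
          intro m
          rw [hmS]
          dsimp only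
          by_cases h1 : (⟨a1, m⟩ : (j : Fin d) × Fin (β j + 1)) ∈ S
          · rw [if_pos h1]
            intro he
            have hm : a2 = m := hyinj a1 he
            apply ha
            cases hm
            exact h1
          · rw [if_neg h1]
            intro he
            exact hcross a1 m a2 he.symm
        have hstep : (fun j m =>
            if (⟨j, m⟩ : (j : Fin d) × Fin (β j + 1)) ∈ insert ⟨a1, a2⟩ S then y' j m else x j m)
            = Function.update mS a1 (Function.update (mS a1) a2 (y' a1 a2)) := by
          funext j m
          by_cases hj : j = a1
          · subst hj
            rw [Function.update_self]
            by_cases hm : m = a2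
            · subst hm
              rw [Function.update_self, if_pos (Finset.mem_insert_self _ S)]
            · rw [Function.update_of_ne hm, hmS]
              dsimp only
              have hiff : ((⟨j, m⟩ : (j : Fin d) × Fin (β j + 1)) ∈ insert ⟨j, a2⟩ S)
                  ↔ ((⟨j, m⟩ : (j : Fin d) × Fin (β j + 1)) ∈ S) := by
                rw [Finset.mem_insert]
                constructor
                · rintro (h | h)
                  · exact absurd (eq_of_heq (Sigma.mk.inj_iff.mp h).2) hm
                  · exact h
                · exact Or.inr
              by_cases hS : (⟨j, m⟩ : (j : Fin d) × Fin (β j + 1)) ∈ S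
              · rw [if_pos (hiff.mpr hS), if_pos hS]
              · rw [if_neg (fun hh => hS (hiff.mp hh)), if_neg hS]
          · rw [Function.update_of_ne hj, hmS]
            dsimp only
            have hiff : ((⟨j, m⟩ : (j : Fin d) × Fin (β j + 1)) ∈ insert ⟨a1, a2⟩ S)
                ↔ ((⟨j, m⟩ : (j : Fin d) × Fin (β j + 1)) ∈ S) := by
              rw [Finset.mem_insert]
              constructor
              · rintro (h | h)
                · exact absurd (congrArg Sigma.fst h) hj
                · exact h
              · exact Or.inr
            by_cases hS : (⟨j, m⟩ : (j : Fin d) × Fin (β j + 1)) ∈ S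
            · rw [if_pos (hiff.mpr hS), if_pos hS]
            · rw [if_neg (fun hh => hS (hiff.mp hh)), if_neg hS]
        rw [hstep]
        have h1 := step1 mS hmem hdist a1 a2 (y' a1 a2) (hy' a1 a2) hbne
        have h2 : Φb β (Function.update mS a1 (Function.update (mS a1) a2 (y' a1 a2)))
              - Φb β x
            = -(Φb β mS
                - Φb β (Function.update mS a1 (Function.update (mS a1) a2 (y' a1 a2))))
              + (Φb β mS - Φb β x) := by ring
        rw [h2]
        refine le_trans (Padic.nonarchimedean _ _) ?_
        rw [norm_neg]
        exact max_le h1 ih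
    have hfin : (fun j m =>
        if (⟨j, m⟩ : (j : Fin d) × Fin (β j + 1)) ∈ (Finset.univ : Finset ((j : Fin d) × Fin (β j + 1)))
        then y' j m else x j m) = y' := by
      funext j m
      rw [if_pos (Finset.mem_univ _)]
    have hmain := main Finset.univ
    rw [hfin] at hmain
    rw [norm_sub_rev]
    exact hmain
  -- Step 3: density and continuity
  have key : ∀ x ∈ BlockDomain {v : Fin d → ℚ_[p] | ∀ j, ‖v j‖ ≤ 1} β,
      ∀ y0 ∈ BlockDomain {v : Fin d → ℚ_[p] | ∀ j, ‖v j‖ ≤ 1} β,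
      ‖Φb β x - Φb β y0‖ ≤ C := by
    intro x hxmem y0 hy0mem
    by_contra hcon
    push_neg at hcon
    obtain ⟨δ, hδdef⟩ : ∃ δ : ℝ, δ = ‖Φb β x - Φb β y0‖ := ⟨_, rfl⟩
    rw [← hδdef] at hcon
    have hδ0 : 0 < δ := lt_trans hC0 hcon
    have hcx := (hΦb β).1 x hxmem
    rw [Metric.continuousWithinAt_iff] at hcx
    obtain ⟨δ₁, hδ₁, hcx⟩ := hcx δ hδ0
    have hcy := (hΦb β).1 y0 hy0mem
    rw [Metric.continuousWithinAt_iff] at hcy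
    obtain ⟨δ₂, hδ₂, hcy⟩ := hcy δ hδ0
    have hε0 : 0 < min δ₁ δ₂ := lt_min hδ₁ hδ₂
    set Z : (((j : Fin d) × Fin (β j + 1)) ⊕ ((j : Fin d) × Fin (β j + 1))) → ℚ_[p] :=
      Sum.elim (fun q => x q.1 q.2) (fun q => y0 q.1 q.2) with hZ
    have hbound : ∀ i, ‖Z i‖ ≤ 1 := by
      intro i
      rcases i with q | q
      · exact (mem_unitBlockDomain_iff x).mp hxmem q.1 q.2
      · exact (mem_unitBlockDomain_iff y0).mp hy0mem q.1 q.2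
    obtain ⟨w, hwinj, hw⟩ := exists_inj_approx' Z hbound (min δ₁ δ₂) hε0
    set x' : (j : Fin d) → Fin (β j + 1) → ℚ_[p] := fun j m => w (Sum.inl ⟨j, m⟩) with hx'
    set y' : (j : Fin d) → Fin (β j + 1) → ℚ_[p] := fun j m => w (Sum.inr ⟨j, m⟩) with hy'
    have hx'1 : ∀ j m, ‖x' j m‖ ≤ 1 := fun j m => (hw (Sum.inl ⟨j, m⟩)).1
    have hy'1 : ∀ j m, ‖y' j m‖ ≤ 1 := fun j m => (hw (Sum.inr ⟨j, m⟩)).1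
    have hx'close : ∀ j m, ‖x' j m - x j m‖ < min δ₁ δ₂ := fun j m => by
      exact (hw (Sum.inl ⟨j, m⟩)).2
    have hy'close : ∀ j m, ‖y' j m - y0 j m‖ < min δ₁ δ₂ := fun j m => by
      exact (hw (Sum.inr ⟨j, m⟩)).2
    have hx'inj : ∀ j, Function.Injective (x' j) := by
      intro j m m' he
      have h2 := hwinj he
      exact eq_of_heq (Sigma.mk.inj_iff.mp (Sum.inl.inj h2)).2
    have hy'inj : ∀ j, Function.Injective (y' j) := by
      intro j m m' he
      have h2 := hwinj he
      exact eq_of_heq (Sigma.mk.inj_iff.mp (Sum.inr.inj h2)).2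
    have hcrossinj : ∀ j m m', x' j m ≠ y' j m' := by
      intro j m m' he
      have h2 := hwinj he
      simp at h2
    have hdx : dist x' x < δ₁ := by
      rw [dist_pi_lt_iff hδ₁]
      intro j
      rw [dist_pi_lt_iff hδ₁]
      intro m
      rw [dist_eq_norm]
      exact lt_of_lt_of_le (hx'close j m) (min_le_left _ _)
    have hdy : dist y' y0 < δ₂ := by
      rw [dist_pi_lt_iff hδ₂]
      intro j
      rw [dist_pi_lt_iff hδ₂]
      intro m
      rw [dist_eq_norm]
      exact lt_of_lt_of_le (hy'close j m) (min_le_right _ _)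
    have hx'mem := (mem_unitBlockDomain_iff x').mpr hx'1
    have hy'mem := (mem_unitBlockDomain_iff y').mpr hy'1
    have h1 := hcx hx'mem hdx
    have h2 := hcy hy'mem hdy
    have h3 := tele x' y' hx'1 hy'1 hx'inj hy'inj hcrossinj
    have hsplit : Φb β x - Φb β y0
        = (Φb β x - Φb β x') + ((Φb β x' - Φb β y') + (Φb β y' - Φb β y0)) := by ring
    have hlt : δ < δ := by
      calc δ = ‖(Φb β x - Φb β x') + ((Φb β x' - Φb β y') + (Φb β y' - Φb β y0))‖ := by
            rw [hδdef, hsplit]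
        _ ≤ max ‖Φb β x - Φb β x'‖ (max ‖Φb β x' - Φb β y'‖ ‖Φb β y' - Φb β y0‖) :=
            le_trans (Padic.nonarchimedean _ _)
              (max_le_max le_rfl (Padic.nonarchimedean _ _))
        _ < δ := by
            apply max_lt
            · rw [norm_sub_rev, ← dist_eq_norm]
              exact h1
            · apply max_lt
              · exact lt_of_le_of_lt h3 hcon
              · rw [← dist_eq_norm]
                exact h2
    exact lt_irrefl δ hlt
  -- Conclusion
  obtain ⟨x₀, hx₀mem, hx₀⟩ := hwit
  intro y hy
  have hxy := key x₀ hx₀mem y hy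
  have e1 : C ≤ (p:ℝ) ^ (-(η k : ℤ) - 1) := by
    refine zpow_le_zpow_right₀ (le_of_lt hp1) ?_
    have := hη k
    omega
  have e2 : (p:ℝ) ^ (-(η k : ℤ) - 1) < (p:ℝ) ^ (-(η k : ℤ)) :=
    zpow_lt_zpow_right₀ hp1 (by omega)
  have hlt : ‖Φb β y - Φb β x₀‖ < ‖Φb β x₀‖ := by
    rw [norm_sub_rev]
    calc ‖Φb β x₀ - Φb β y‖ ≤ C := hxy
      _ ≤ (p:ℝ) ^ (-(η k : ℤ) - 1) := e1
      _ < (p:ℝ) ^ (-(η k : ℤ)) := e2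
      _ < ‖Φb β x₀‖ := hx₀
  have heq : ‖Φb β y‖ = ‖Φb β x₀‖ := by
    have hne : ‖Φb β x₀‖ ≠ ‖Φb β y - Φb β x₀‖ := ne_of_gt hlt
    have h2 := Padic.add_eq_max_of_ne hne
    have h3 : Φb β x₀ + (Φb β y - Φb β x₀) = Φb β y := by ring
    rw [h3] at h2
    rw [h2]
    exact max_eq_left (le_of_lt hlt)
  calc (p:ℝ) ^ (-(η k : ℤ) - 1) < (p:ℝ) ^ (-(η k : ℤ)) := e2
    _ < ‖Φb β x₀‖ := hx₀
    _ = ‖Φb β y‖ := heq.symm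
end

section
/- Let p be a prime, U ⊆ ℚ_p a set without isolated points, g : U → ℚ_p a C^{j+1} function with j > 0, and let 1 ≤ i ≤ j. Then for all (x_1,…,x_{i+1}) ∈ U^{i+1}: Φ̄^i (g')(x_1,…,x_{i+1}) = Σ_{n=1}^{i+1} Φ̄^{i+1} g(x_1,…,x_{n−1}, x_n, x_n, x_{n+1},…,x_{i+1}), where g' is the derivative of g and in the n-th summand the argument x_n is repeated twice. -/
/- Preliminary definitions following Kleinbock–Tomanov and
   Beresnevich–Datta–Ghosh, "Good functions, measures, and the
   Kleinbock-Tomanov conjecture". -/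

open scoped BigOperators NNReal ENNReal
open Finset MeasureTheory Metric

namespace S17

open KT Filter Topology Metric Finset Function

variable {p : ℕ} [Fact p.Prime]

lemma infinite_near {U : Set ℚ_[p]} (hU : ∀ x ∈ U, x ∈ closure (U \ {x}))
    {x : ℚ_[p]} (hx : x ∈ U) {ε : ℝ} (hε : 0 < ε) :
    (U ∩ Metric.ball x ε).Infinite := by
  intro hfin
  have h1 : x ∈ closure ((U ∩ Metric.ball x ε) \ {x}) := by
    rw [Metric.mem_closure_iff]
    intro δ hδ
    obtain ⟨y, hy, hdy⟩ := Metric.mem_closure_iff.1 (hU x hx) (min δ ε) (lt_min hδ hε)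
    refine ⟨y, ⟨⟨hy.1, ?_⟩, hy.2⟩, hdy.trans_le (min_le_left _ _)⟩
    rw [Metric.mem_ball, dist_comm]
    exact hdy.trans_le (min_le_right _ _)
  rw [((hfin.sdiff (t := {x})).isClosed).closure_eq] at h1
  exact h1.2 rfl

lemma exists_near_avoid {U : Set ℚ_[p]} (hU : ∀ x ∈ U, x ∈ closure (U \ {x}))
    {x : ℚ_[p]} (hx : x ∈ U) {ε : ℝ} (hε : 0 < ε) {F : Set ℚ_[p]} (hF : F.Finite) :
    ∃ y, y ∈ U ∧ dist y x < ε ∧ y ∉ F := by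
  obtain ⟨y, hy⟩ := ((infinite_near hU hx hε).diff hF).nonempty
  exact ⟨y, hy.1.1, by simpa [Metric.mem_ball] using hy.1.2, hy.2⟩

lemma exists_inj_approx {U : Set ℚ_[p]} (hU : ∀ x ∈ U, x ∈ closure (U \ {x})) :
    ∀ (k : ℕ) (x : Fin k → ℚ_[p]), (∀ m, x m ∈ U) → ∀ ε : ℝ, 0 < ε →
      ∃ y : Fin k → ℚ_[p], (∀ m, y m ∈ U) ∧ Function.Injective y ∧
        ∀ m, dist (y m) (x m) < ε := by
  intro k
  induction k with
  | zero =>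
    intro x hx ε hε
    exact ⟨x, hx, fun a => a.elim0, fun m => m.elim0⟩
  | succ k ih =>
    intro x hx ε hε
    obtain ⟨y', hy'U, hy'inj, hy'd⟩ := ih (x ∘ Fin.succ) (fun m => hx _) ε hε
    obtain ⟨y₀, hy₀U, hy₀d, hy₀F⟩ :=
      exists_near_avoid hU (hx 0) hε (Set.finite_range y')
    refine ⟨Fin.cons y₀ y', ?_, ?_, ?_⟩
    · intro m
      induction m using Fin.cases with
      | zero => simpa using hy₀U
      | succ m => simpa using hy'U m
    · rw [Fin.cons_injective_iff]
      exact ⟨hy₀F, hy'inj⟩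
    · intro m
      induction m using Fin.cases with
      | zero => simpa using hy₀d
      | succ m => simpa using hy'd m

lemma mem_closure_inj {U : Set ℚ_[p]} (hU : ∀ x ∈ U, x ∈ closure (U \ {x}))
    {k : ℕ} (x : Fin k → ℚ_[p]) (hx : ∀ m, x m ∈ U) :
    x ∈ closure {y : Fin k → ℚ_[p] | (∀ m, y m ∈ U) ∧ Function.Injective y} := by
  rw [Metric.mem_closure_iff]
  intro ε hε
  obtain ⟨y, h1, h2, h3⟩ := exists_inj_approx hU k x hx ε hε
  refine ⟨y, ⟨h1, h2⟩, ?_⟩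
  rw [dist_comm, dist_pi_lt_iff hε]
  exact h3

lemma mem_closure_avoid {U : Set ℚ_[p]} (hU : ∀ x ∈ U, x ∈ closure (U \ {x}))
    {k : ℕ} (x : Fin k → ℚ_[p]) (hx : ∀ m, x m ∈ U) {F : Set ℚ_[p]} (hF : F.Finite) :
    x ∈ closure {u : Fin k → ℚ_[p] | ∀ m, u m ∈ U \ F} := by
  rw [Metric.mem_closure_iff]
  intro ε hε
  choose y hyU hyd hyF using fun m => exists_near_avoid hU (hx m) hε hF
  refine ⟨y, fun m => ⟨hyU m, hyF m⟩, ?_⟩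
  rw [dist_comm, dist_pi_lt_iff hε]
  exact hyd

end S17
namespace S17

open KT Filter Topology Metric Finset Function

variable {p : ℕ} [Fact p.Prime]

lemma phi1_comp_perm (f : ℚ_[p] → ℚ_[p]) (k : ℕ) (x : Fin (k + 1) → ℚ_[p])
    (σ : Equiv.Perm (Fin (k + 1))) : phi1 f k (x ∘ σ) = phi1 f k x := by
  unfold phi1
  refine Fintype.sum_bijective σ σ.bijective _ _ (fun i => ?_)
  have hset : (Finset.univ.erase i).map σ.toEmbedding = Finset.univ.erase (σ i) := by
    rw [Finset.map_erase, Finset.univ_map_equiv_to_embedding]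
    simp
  simp only [Function.comp_apply]
  congr 1
  rw [← hset, Finset.prod_map]
  rfl

lemma ext_symm {U : Set ℚ_[p]} (hU : ∀ x ∈ U, x ∈ closure (U \ {x}))
    {f : ℚ_[p] → ℚ_[p]} {k : ℕ} {Φ : (Fin (k + 1) → ℚ_[p]) → ℚ_[p]}
    (hΦ : IsDQExt1 U f k Φ) {z : Fin (k + 1) → ℚ_[p]} (hz : ∀ m, z m ∈ U)
    (σ : Equiv.Perm (Fin (k + 1))) : Φ (z ∘ σ) = Φ z := by
  set S : Set (Fin (k + 1) → ℚ_[p]) :=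
    {y | (∀ m, y m ∈ U) ∧ Function.Injective y} with hS
  have hne : (𝓝[S] z).NeBot :=
    mem_closure_iff_nhdsWithin_neBot.1 (mem_closure_inj hU z hz)
  have h1 : Tendsto Φ (𝓝[S] z) (𝓝 (Φ z)) :=
    (hΦ.1 z hz).mono (fun y hy => hy.1)
  have hcont : Tendsto (fun y : Fin (k + 1) → ℚ_[p] => y ∘ σ) (𝓝[S] z)
      (𝓝[{y : Fin (k + 1) → ℚ_[p] | ∀ m, y m ∈ U}] (z ∘ σ)) := by
    rw [tendsto_nhdsWithin_iff]
    constructor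
    · exact ((continuous_pi fun m => continuous_apply (σ m)).tendsto z).mono_left
        nhdsWithin_le_nhds
    · exact eventually_nhdsWithin_of_forall fun y hy m => hy.1 (σ m)
  have h2 : Tendsto (fun y : Fin (k + 1) → ℚ_[p] => Φ (y ∘ σ)) (𝓝[S] z)
      (𝓝 (Φ (z ∘ σ))) :=
    Filter.Tendsto.comp (hΦ.1 (z ∘ σ) (fun m => hz (σ m))) hcont
  have heq : ∀ᶠ y in 𝓝[S] z, Φ (y ∘ σ) = Φ y := by
    filter_upwards [self_mem_nhdsWithin] with y hy
    have e1 : Φ (y ∘ ⇑σ) = phi1 f k (y ∘ ⇑σ) :=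
      hΦ.2 _ (fun m => hy.1 (σ m)) (hy.2.comp σ.injective)
    rw [e1, hΦ.2 y hy.1 hy.2, phi1_comp_perm]
  exact tendsto_nhds_unique (Filter.Tendsto.congr' heq h2) h1

lemma dup_eq_cons_comp {k : ℕ} (n : Fin (k + 1)) (x : Fin (k + 1) → ℚ_[p]) :
    dup n x = Fin.cons (x n) x ∘ ⇑(Fin.cycleRange n.succ) := by
  funext m
  rcases lt_trichotomy m n.succ with h | h | h
  · have hm : (m : ℕ) ≤ (n : ℕ) := by
      have := (Fin.lt_def).1 h
      simp [Fin.val_succ] at this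
      omega
    have h1 : (m + 1 : Fin (k + 2)) = Fin.succ ⟨(m : ℕ), by
        have h2 := (Fin.lt_def).1 h
        have h3 := n.isLt
        simp [Fin.val_succ] at h2
        omega⟩ := by
      apply Fin.ext
      rw [Fin.val_add_one_of_lt (lt_of_lt_of_le h (Fin.le_last _))]
      simp
    rw [Function.comp_apply, Fin.cycleRange_of_lt h, h1, Fin.cons_succ]
    rw [dup, dif_pos hm]
  · rw [Function.comp_apply, Fin.cycleRange_of_eq h, Fin.cons_zero]
    have hm : ¬ (m : ℕ) ≤ (n : ℕ) := by
      subst h; simp [Fin.val_succ]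
    rw [dup, dif_neg hm]
    congr 1
    apply Fin.ext
    subst h
    simp [Fin.val_succ]
  · have hmv := (Fin.lt_def).1 h
    simp only [Fin.val_succ] at hmv
    have hm : ¬ (m : ℕ) ≤ (n : ℕ) := by omega
    have h1 : m = Fin.succ ⟨(m : ℕ) - 1, by have := m.isLt; omega⟩ := by
      apply Fin.ext
      simp [Fin.val_succ]
      omega
    rw [Function.comp_apply, Fin.cycleRange_of_gt h]
    conv_lhs => rw [dup, dif_neg hm]
    conv_rhs => rw [h1, Fin.cons_succ]

lemma prod_erase_zero {k : ℕ} (h : Fin (k + 2) → ℚ_[p]) :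
    ∏ m ∈ Finset.univ.erase (0 : Fin (k + 2)), h m = ∏ j : Fin (k + 1), h j.succ := by
  rw [Fin.univ_succ, Finset.erase_cons, Finset.prod_map]
  rfl

lemma prod_erase_succ {k : ℕ} (h : Fin (k + 2) → ℚ_[p]) (m : Fin (k + 1)) :
    ∏ m' ∈ Finset.univ.erase m.succ, h m' =
      h 0 * ∏ j ∈ Finset.univ.erase m, h j.succ := by
  have hset : ((Finset.univ : Finset (Fin (k + 1))).map
      ⟨Fin.succ, Fin.succ_injective _⟩).erase m.succ =
      ((Finset.univ : Finset (Fin (k + 1))).erase m).map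
        ⟨Fin.succ, Fin.succ_injective _⟩ :=
    (Finset.map_erase _ _ m).symm
  rw [Fin.univ_succ, Finset.erase_cons_of_ne _ (Fin.succ_ne_zero m).symm,
    Finset.prod_cons, hset, Finset.prod_map]
  rfl

lemma phi1_cons (f : ℚ_[p] → ℚ_[p]) (k : ℕ) (t : ℚ_[p]) (x : Fin (k + 1) → ℚ_[p]) :
    phi1 f (k + 1) (Fin.cons t x) =
      f t * (∏ m, (t - x m))⁻¹ +
        ∑ m, f (x m) * ((x m - t) * ∏ j ∈ Finset.univ.erase m, (x m - x j))⁻¹ := by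
  unfold phi1
  rw [Fin.sum_univ_succ]
  congr 1
  · simp only [Fin.cons_zero]
    congr 2
    rw [prod_erase_zero (fun m' : Fin (k + 2) => t - (Fin.cons t x : Fin (k + 2) → ℚ_[p]) m')]
    simp
  · refine Finset.sum_congr rfl fun m _ => ?_
    simp only [Fin.cons_succ]
    congr 2
    rw [prod_erase_succ (fun m' : Fin (k + 2) => x m - (Fin.cons t x : Fin (k + 2) → ℚ_[p]) m') m]
    simp

lemma sum_erase_antisymm {k : ℕ} (F : Fin k → Fin k → ℚ_[p]) :
    ∑ n, ∑ m ∈ Finset.univ.erase n, (F n m - F m n) = 0 := by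
  have key : ∀ n, ∑ m ∈ Finset.univ.erase n, (F n m - F m n) =
      ∑ m, (if m = n then (0 : ℚ_[p]) else F n m - F m n) := by
    intro n
    calc ∑ m ∈ Finset.univ.erase n, (F n m - F m n)
        = ∑ m ∈ Finset.univ.erase n, (if m = n then (0 : ℚ_[p]) else F n m - F m n) :=
          Finset.sum_congr rfl fun m hm => (if_neg (Finset.ne_of_mem_erase hm)).symm
      _ = ∑ m, (if m = n then (0 : ℚ_[p]) else F n m - F m n) :=
          Finset.sum_erase _ (by simp)
  simp only [key]
  set SS := ∑ n, ∑ m, (if m = n then (0 : ℚ_[p]) else F n m - F m n) with hSS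
  have h2 : SS = -SS := by
    calc SS = ∑ m, ∑ n, (if m = n then (0 : ℚ_[p]) else F n m - F m n) := Finset.sum_comm
      _ = ∑ n, ∑ m, -(if m = n then (0 : ℚ_[p]) else F n m - F m n) := by
          refine Finset.sum_congr rfl fun n _ => Finset.sum_congr rfl fun m _ => ?_
          by_cases h : m = n
          · simp [h]
          · rw [if_neg (fun hh => h hh.symm), if_neg h]
            ring
      _ = -SS := by rw [hSS]; simp
  have h3 : (2 : ℚ_[p]) * SS = 0 := by
    rw [two_mul]; nth_rewrite 2 [h2]; ring
  rcases mul_eq_zero.mp h3 with h | h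
  · exact absurd h two_ne_zero
  · exact h

end S17
namespace S17

open KT Filter Topology Metric Finset Function

variable {p : ℕ} [Fact p.Prime]

lemma phi1_zero (f : ℚ_[p] → ℚ_[p]) (y : Fin 1 → ℚ_[p]) : phi1 f 0 y = f (y 0) := by
  unfold phi1
  rw [Fin.sum_univ_one]
  have h : (Finset.univ.erase (0 : Fin 1)) = ∅ := by decide
  simp [h]

lemma phi1_pair (f : ℚ_[p] → ℚ_[p]) (a b : ℚ_[p]) :
    phi1 f 1 (fun jj : Fin 2 => if jj = 0 then a else b) =
      f a * (a - b)⁻¹ + f b * (b - a)⁻¹ := by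
  unfold phi1
  rw [Fin.sum_univ_two]
  have h0 : (Finset.univ.erase (0 : Fin 2)) = {1} := by decide
  have h1 : (Finset.univ.erase (1 : Fin 2)) = {0} := by decide
  simp [h0, h1]

lemma pair_inj {a b : ℚ_[p]} (h : a ≠ b) :
    Function.Injective (fun jj : Fin 2 => if jj = 0 then a else b) := by
  intro s t hst
  fin_cases s <;> fin_cases t <;> simp_all

lemma tendsto_g {U : Set ℚ_[p]} {f : ℚ_[p] → ℚ_[p]}
    {Φ0 : (Fin 1 → ℚ_[p]) → ℚ_[p]} (hΦ0 : IsDQExt1 U f 0 Φ0)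
    {a : ℚ_[p]} (ha : a ∈ U) : Tendsto f (𝓝[U] a) (𝓝 (f a)) := by
  have heq : ∀ t ∈ U, f t = Φ0 (fun _ => t) := by
    intro t ht
    rw [hΦ0.2 (fun _ => t) (fun _ => ht) (fun s u _ => Fin.ext (by omega)), phi1_zero]
  have hp : Tendsto (fun t : ℚ_[p] => (fun _ : Fin 1 => t)) (𝓝[U] a)
      (𝓝[{y : Fin 1 → ℚ_[p] | ∀ m, y m ∈ U}] (fun _ => a)) := by
    rw [tendsto_nhdsWithin_iff]
    refine ⟨((continuous_pi fun _ => continuous_id).tendsto a).mono_left nhdsWithin_le_nhds, ?_⟩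
    exact eventually_nhdsWithin_of_forall fun t ht _ => ht
  have h1 : Tendsto (fun t => Φ0 (fun _ => t)) (𝓝[U] a) (𝓝 (Φ0 (fun _ => a))) :=
    Filter.Tendsto.comp (hΦ0.1 _ (fun _ => ha)) hp
  have h2 : Φ0 (fun _ => a) = f a := (heq a ha).symm
  rw [h2] at h1
  exact h1.congr' (by filter_upwards [self_mem_nhdsWithin] with t ht using (heq t ht).symm)

lemma hasDerivAt_dn {k : ℕ} (x : Fin (k + 1) → ℚ_[p]) (hxinj : Function.Injective x)
    (n : Fin (k + 1)) :
    HasDerivAt (fun t : ℚ_[p] => ∏ m ∈ Finset.univ.erase n, (t - x m)⁻¹)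
      (∑ m ∈ Finset.univ.erase n,
        -((x n - x m)⁻¹ * (∏ j ∈ Finset.univ.erase n, (x n - x j))⁻¹)) (x n) := by
  have hne : ∀ m ∈ Finset.univ.erase n, x n - x m ≠ 0 := fun m hm =>
    sub_ne_zero.mpr fun h => (Finset.ne_of_mem_erase hm) (hxinj h).symm
  have hd : HasDerivAt (fun t : ℚ_[p] => ∏ m ∈ Finset.univ.erase n, (t - x m)⁻¹)
      (∑ m ∈ Finset.univ.erase n,
        (∏ j ∈ (Finset.univ.erase n).erase m, (x n - x j)⁻¹) •
          (-1 / (x n - x m) ^ 2)) (x n) := by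
    apply HasDerivAt.fun_finsetProd
    intro m hm
    have := ((hasDerivAt_id (x n)).sub_const (x m)).inv (hne m hm)
    simpa [Pi.inv_def] using this
  convert hd using 1
  refine Finset.sum_congr rfl fun m hm => ?_
  have ha := hne m hm
  have hsplit : ∏ j ∈ Finset.univ.erase n, (x n - x j) =
      (x n - x m) * ∏ j ∈ (Finset.univ.erase n).erase m, (x n - x j) :=
    (Finset.mul_prod_erase _ _ hm).symm
  have hP : (∏ j ∈ (Finset.univ.erase n).erase m, (x n - x j)) ≠ 0 :=
    Finset.prod_ne_zero_iff.mpr fun j hj => hne j (Finset.mem_of_mem_erase hj)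
  rw [hsplit, smul_eq_mul, Finset.prod_inv_distrib]
  field_simp

end S17
namespace S17

open KT Filter Topology Metric Finset Function

variable {p : ℕ} [Fact p.Prime]

lemma stage1 {U : Set ℚ_[p]} (hU : ∀ x ∈ U, x ∈ closure (U \ {x}))
    (g : ℚ_[p] → ℚ_[p]) {i : ℕ}
    {Φ0 : (Fin 1 → ℚ_[p]) → ℚ_[p]} (hΦ0 : IsDQExt1 U g 0 Φ0)
    {Φ1 : (Fin 2 → ℚ_[p]) → ℚ_[p]} (hΦ1 : IsDQExt1 U g 1 Φ1)
    {Φi : (Fin (i + 2) → ℚ_[p]) → ℚ_[p]} (hΦi : IsDQExt1 U g (i + 1) Φi)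
    (x : Fin (i + 1) → ℚ_[p]) (hxU : ∀ m, x m ∈ U) (hxinj : Function.Injective x) :
    ∑ n, Φ1 (fun _ => x n) * (∏ m ∈ Finset.univ.erase n, (x n - x m))⁻¹ =
      ∑ n, Φi (dup n x) := by
  classical
  set S : Set (Fin (i + 1) → ℚ_[p]) := {u | ∀ m, u m ∈ U \ Set.range x} with hSdef
  have hne : (𝓝[S] x).NeBot :=
    mem_closure_iff_nhdsWithin_neBot.1 (mem_closure_avoid hU x hxU (Set.finite_range x))
  set c : Fin (i + 1) → ℚ_[p] :=
    fun n => (∏ m ∈ Finset.univ.erase n, (x n - x m))⁻¹ with hc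
  have hxne : ∀ {m n : Fin (i + 1)}, m ≠ n → x m - x n ≠ 0 := fun {m n} h =>
    sub_ne_zero.mpr fun he => h (hxinj he)
  set pair : Fin (i + 1) → (Fin (i + 1) → ℚ_[p]) → (Fin 2 → ℚ_[p]) :=
    fun n u => fun jj => if jj = 0 then x n else u n with hpair
  -- A-side convergence
  have hA : Tendsto (fun u => ∑ n, Φ1 (pair n u) * c n) (𝓝[S] x)
      (𝓝 (∑ n, Φ1 (fun _ => x n) * c n)) := by
    apply tendsto_finset_sum
    intro n _
    have hp : Tendsto (pair n) (𝓝[S] x)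
        (𝓝[{y : Fin 2 → ℚ_[p] | ∀ m, y m ∈ U}] (fun _ => x n)) := by
      rw [tendsto_nhdsWithin_iff]
      constructor
      · have hcont : Continuous (pair n) := by
          apply continuous_pi
          intro jj
          by_cases hjj : jj = 0
          · simpa [hpair, hjj] using continuous_const
          · simpa [hpair, hjj] using continuous_apply n
        have hval : pair n x = fun _ => x n := by
          funext jj; by_cases hjj : jj = 0 <;> simp [hpair, hjj]
        exact hval ▸ (hcont.tendsto x).mono_left nhdsWithin_le_nhds
      · refine eventually_nhdsWithin_of_forall fun u hu m => ?_
        by_cases hm : m = 0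
        · simpa [hpair, hm] using hxU n
        · simpa [hpair, hm] using (hu n).1
    exact (Filter.Tendsto.comp (hΦ1.1 _ (fun _ => hxU n)) hp).mul_const _
  -- B-side convergence
  have hconsU : ∀ (t : ℚ_[p]), t ∈ U → ∀ m : Fin (i + 2),
      (Fin.cons t x : Fin (i + 2) → ℚ_[p]) m ∈ U := by
    intro t ht m
    induction m using Fin.cases with
    | zero => simpa using ht
    | succ mm => simpa using hxU mm
  have hB : Tendsto (fun u : Fin (i + 1) → ℚ_[p] => ∑ n, Φi (Fin.cons (u n) x))
      (𝓝[S] x) (𝓝 (∑ n, Φi (Fin.cons (x n) x))) := by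
    apply tendsto_finset_sum
    intro n _
    have hp : Tendsto (fun u : Fin (i + 1) → ℚ_[p] =>
          (Fin.cons (u n) x : Fin (i + 2) → ℚ_[p])) (𝓝[S] x)
        (𝓝[{y : Fin (i + 2) → ℚ_[p] | ∀ m, y m ∈ U}] (Fin.cons (x n) x)) := by
      rw [tendsto_nhdsWithin_iff]
      constructor
      · have hcont : Continuous (fun u : Fin (i + 1) → ℚ_[p] =>
            (Fin.cons (u n) x : Fin (i + 2) → ℚ_[p])) := by
          apply continuous_pi
          intro m
          induction m using Fin.cases with
          | zero => simpa using continuous_apply n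
          | succ mm => simpa using (continuous_const : Continuous fun _ : Fin (i+1) → ℚ_[p] => x mm)
        exact (hcont.tendsto x).mono_left nhdsWithin_le_nhds
      · exact eventually_nhdsWithin_of_forall fun u hu => hconsU _ (hu n).1
    exact Filter.Tendsto.comp (hΦi.1 _ (hconsU _ (hxU n))) hp
  -- raw values on S
  have hAeq : ∀ᶠ u in 𝓝[S] x, (∑ n, Φ1 (pair n u) * c n) =
      ∑ n, (g (x n) * (x n - u n)⁻¹ + g (u n) * (u n - x n)⁻¹) * c n := by
    filter_upwards [self_mem_nhdsWithin] with u hu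
    refine Finset.sum_congr rfl fun n _ => ?_
    have hun : u n ∈ U \ Set.range x := hu n
    have hne2 : x n ≠ u n := fun h => hun.2 ⟨n, h⟩
    rw [hΦ1.2 (pair n u) ?memb (pair_inj hne2), hpair, phi1_pair]
    intro m
    by_cases hm : m = 0
    · simpa [hpair, hm] using hxU n
    · simpa [hpair, hm] using hun.1
  have hBeq : ∀ᶠ u in 𝓝[S] x, (∑ n, Φi (Fin.cons (u n) x)) =
      ∑ n, (g (u n) * (∏ m, (u n - x m))⁻¹ +
        ∑ m, g (x m) * ((x m - u n) * ∏ j ∈ Finset.univ.erase m, (x m - x j))⁻¹) := by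
    filter_upwards [self_mem_nhdsWithin] with u hu
    refine Finset.sum_congr rfl fun n _ => ?_
    have hinj : Function.Injective (Fin.cons (u n) x : Fin (i + 2) → ℚ_[p]) :=
      Fin.cons_injective_iff.mpr ⟨(hu n).2, hxinj⟩
    rw [hΦi.2 _ (hconsU _ (hu n).1) hinj, phi1_cons]
  -- difference in closed form
  have hdiff : ∀ᶠ u in 𝓝[S] x,
      (∑ n, Φ1 (pair n u) * c n) - (∑ n, Φi (Fin.cons (u n) x)) =
      ∑ n, (-(g (u n) *
          slope (fun t : ℚ_[p] => ∏ m ∈ Finset.univ.erase n, (t - x m)⁻¹) (x n) (u n))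
        - ∑ m ∈ Finset.univ.erase n, g (x m) * ((x m - u n)⁻¹ * c m)) := by
    filter_upwards [hAeq, hBeq, self_mem_nhdsWithin] with u h1 h2 hu
    rw [h1, h2, ← Finset.sum_sub_distrib]
    refine Finset.sum_congr rfl fun n _ => ?_
    have hun : u n ∈ U \ Set.range x := hu n
    have hau : ∀ m, x m - u n ≠ 0 := fun m =>
      sub_ne_zero.mpr fun h => hun.2 ⟨m, h⟩
    have hua : u n - x n ≠ 0 := fun h => hau n (by
      have : x n - u n = -(u n - x n) := by ring
      rw [this, h, neg_zero])
    -- split the inner sum at n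
    have hsplit : (∑ m, g (x m) * ((x m - u n) * ∏ j ∈ Finset.univ.erase m, (x m - x j))⁻¹)
        = g (x n) * ((x n - u n) * ∏ j ∈ Finset.univ.erase n, (x n - x j))⁻¹ +
          ∑ m ∈ Finset.univ.erase n,
            g (x m) * ((x m - u n) * ∏ j ∈ Finset.univ.erase m, (x m - x j))⁻¹ :=
      (Finset.add_sum_erase _ _ (Finset.mem_univ n)).symm
    rw [hsplit]
    have hterm : ∀ m ∈ Finset.univ.erase n,
        g (x m) * ((x m - u n) * ∏ j ∈ Finset.univ.erase m, (x m - x j))⁻¹ =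
          g (x m) * ((x m - u n)⁻¹ * c m) := by
      intro m _
      rw [mul_inv, hc]
    rw [Finset.sum_congr rfl hterm]
    -- now pure algebra
    have hprod : (∏ m, (u n - x m)) =
        (u n - x n) * ∏ m ∈ Finset.univ.erase n, (u n - x m) :=
      (Finset.mul_prod_erase _ _ (Finset.mem_univ n)).symm
    have hslope : slope (fun t : ℚ_[p] => ∏ m ∈ Finset.univ.erase n, (t - x m)⁻¹)
        (x n) (u n) =
        ((∏ m ∈ Finset.univ.erase n, (u n - x m))⁻¹ - c n) / (u n - x n) := by
      rw [slope_def_field, Finset.prod_inv_distrib, Finset.prod_inv_distrib]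
    rw [hprod, hslope]
    have hPu : (∏ m ∈ Finset.univ.erase n, (u n - x m)) ≠ 0 :=
      Finset.prod_ne_zero_iff.mpr fun m _ => fun h => (hau m) (by
        have : x m - u n = -(u n - x m) := by ring
        rw [this, h, neg_zero])
    have hQ : (∏ m ∈ Finset.univ.erase n, (x n - x m)) ≠ 0 :=
      Finset.prod_ne_zero_iff.mpr fun m hm =>
        hxne (fun h => (Finset.ne_of_mem_erase hm) h.symm)
    have hxu : x n - u n ≠ 0 := hau n
    set Sig2 := ∑ m ∈ Finset.univ.erase n, g (x m) * ((x m - u n)⁻¹ * c m) with hSig2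
    simp only [hc]
    field_simp
    ring
  -- limit of the closed form
  set T : Fin (i + 1) → ℚ_[p] := fun n =>
    (-(g (x n) * ∑ m ∈ Finset.univ.erase n,
        -((x n - x m)⁻¹ * (∏ j ∈ Finset.univ.erase n, (x n - x j))⁻¹))
      - ∑ m ∈ Finset.univ.erase n, g (x m) * ((x m - x n)⁻¹ * c m)) with hT
  have hE : Tendsto (fun u : Fin (i + 1) → ℚ_[p] => ∑ n,
      (-(g (u n) *
          slope (fun t : ℚ_[p] => ∏ m ∈ Finset.univ.erase n, (t - x m)⁻¹) (x n) (u n))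
        - ∑ m ∈ Finset.univ.erase n, g (x m) * ((x m - u n)⁻¹ * c m)))
      (𝓝[S] x) (𝓝 (∑ n, T n)) := by
    apply tendsto_finset_sum
    intro n _
    have heval : Tendsto (fun u : Fin (i + 1) → ℚ_[p] => u n) (𝓝[S] x)
        (𝓝[(U \ Set.range x : Set ℚ_[p])] (x n)) := by
      rw [tendsto_nhdsWithin_iff]
      exact ⟨((continuous_apply n).tendsto x).mono_left nhdsWithin_le_nhds,
        eventually_nhdsWithin_of_forall fun u hu => hu n⟩
    have hevalU : Tendsto (fun u : Fin (i + 1) → ℚ_[p] => u n) (𝓝[S] x) (𝓝[U] (x n)) :=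
      heval.mono_right (nhdsWithin_mono _ (Set.diff_subset))
    have hevalNe : Tendsto (fun u : Fin (i + 1) → ℚ_[p] => u n) (𝓝[S] x)
        (𝓝[≠] (x n)) :=
      heval.mono_right (nhdsWithin_mono _ (fun t ht h0 => ht.2 (h0 ▸ ⟨n, rfl⟩)))
    have hg : Tendsto (fun u : Fin (i + 1) → ℚ_[p] => g (u n)) (𝓝[S] x)
        (𝓝 (g (x n))) := (tendsto_g hΦ0 (hxU n)).comp hevalU
    have hslope : Tendsto (fun u : Fin (i + 1) → ℚ_[p] =>
        slope (fun t : ℚ_[p] => ∏ m ∈ Finset.univ.erase n, (t - x m)⁻¹) (x n) (u n))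
        (𝓝[S] x) (𝓝 (∑ m ∈ Finset.univ.erase n,
          -((x n - x m)⁻¹ * (∏ j ∈ Finset.univ.erase n, (x n - x j))⁻¹))) :=
      (hasDerivAt_iff_tendsto_slope.1 (hasDerivAt_dn x hxinj n)).comp hevalNe
    have hinner : Tendsto (fun u : Fin (i + 1) → ℚ_[p] =>
        ∑ m ∈ Finset.univ.erase n, g (x m) * ((x m - u n)⁻¹ * c m)) (𝓝[S] x)
        (𝓝 (∑ m ∈ Finset.univ.erase n, g (x m) * ((x m - x n)⁻¹ * c m))) := by
      apply tendsto_finset_sum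
      intro m hm
      have hsub : Tendsto (fun u : Fin (i + 1) → ℚ_[p] => x m - u n) (𝓝[S] x)
          (𝓝 (x m - x n)) :=
        tendsto_const_nhds.sub (((continuous_apply n).tendsto x).mono_left
          nhdsWithin_le_nhds)
      exact (tendsto_const_nhds.mul ((hsub.inv₀
        (hxne (Finset.ne_of_mem_erase hm))).mul_const _))
    exact ((hg.mul hslope).neg).sub hinner
  -- T sums to zero
  have hTzero : ∑ n, T n = 0 := by
    have hTn : ∀ n, T n = ∑ m ∈ Finset.univ.erase n,
        (g (x n) * ((x n - x m)⁻¹ * c n) - g (x m) * ((x m - x n)⁻¹ * c m)) := by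
      intro n
      simp only [hT, hc]
      rw [Finset.sum_sub_distrib]
      congr 1
      rw [Finset.sum_neg_distrib, mul_neg, neg_neg, Finset.mul_sum]
    calc ∑ n, T n = ∑ n, ∑ m ∈ Finset.univ.erase n,
        (g (x n) * ((x n - x m)⁻¹ * c n) - g (x m) * ((x m - x n)⁻¹ * c m)) :=
          Finset.sum_congr rfl fun n _ => hTn n
      _ = 0 := sum_erase_antisymm (fun n m => g (x n) * ((x n - x m)⁻¹ * c n))
  -- assemble
  have hAB : Tendsto (fun u : Fin (i + 1) → ℚ_[p] =>
      (∑ n, Φ1 (pair n u) * c n) - (∑ n, Φi (Fin.cons (u n) x))) (𝓝[S] x) (𝓝 0) := by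
    rw [hTzero] at hE
    exact Filter.Tendsto.congr' (hdiff.mono fun u h => h.symm) hE
  have hfinal : (∑ n, Φ1 (fun _ => x n) * c n) - (∑ n, Φi (Fin.cons (x n) x)) = 0 :=
    tendsto_nhds_unique (hA.sub hB) hAB
  have hmain : (∑ n, Φ1 (fun _ => x n) * c n) = ∑ n, Φi (Fin.cons (x n) x) :=
    sub_eq_zero.mp hfinal
  rw [hmain]
  refine Finset.sum_congr rfl fun n _ => ?_
  rw [dup_eq_cons_comp n x]
  exact (ext_symm hU hΦi (hconsU _ (hxU n)) (Fin.cycleRange n.succ)).symm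

end S17
open KT MeasureTheory Metric in
/-- equation (5.5), `part`.  Let `U ⊆ ℚ_p` have no isolated points,
`g : U → ℚ_p` a `C^{j+1}` function, `j > 0`, and `1 ≤ i ≤ j`.  Then for all
`(x_1,…,x_{i+1}) ∈ U^{i+1}`:
`Φ̄^i g'(x_1,…,x_{i+1}) = Σ_{n=1}^{i+1} Φ̄^{i+1} g(x_1,…,x_n,x_n,…,x_{i+1})`,
where `g'(x) = Φ̄¹ g(x,x)` is the derivative of `g`. -/
theorem stmt17 {p : ℕ} [Fact p.Prime] (U : Set ℚ_[p])
    (hU : ∀ x ∈ U, x ∈ closure (U \ {x}))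
    (g : ℚ_[p] → ℚ_[p]) (j : ℕ) (hj : 0 < j)
    (Φg : (k : ℕ) → (Fin (k + 1) → ℚ_[p]) → ℚ_[p])
    (hΦg : ∀ k ≤ j + 1, IsDQExt1 U g k (Φg k))
    (Φd : (k : ℕ) → (Fin (k + 1) → ℚ_[p]) → ℚ_[p])
    (hΦd : ∀ k ≤ j, IsDQExt1 U (fun t => Φg 1 (fun _ => t)) k (Φd k))
    (i : ℕ) (hi1 : 1 ≤ i) (hij : i ≤ j) :
    ∀ x : Fin (i + 1) → ℚ_[p], (∀ m, x m ∈ U) →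
      Φd i x = ∑ nn : Fin (i + 1), Φg (i + 1) (dup nn x) := by
  intro x hx
  classical
  set S₂ : Set (Fin (i + 1) → ℚ_[p]) :=
    {y | (∀ m, y m ∈ U) ∧ Function.Injective y} with hS₂
  have hne : (nhdsWithin x S₂).NeBot :=
    mem_closure_iff_nhdsWithin_neBot.1 (S17.mem_closure_inj hU x hx)
  have hL : Filter.Tendsto (Φd i) (nhdsWithin x S₂) (nhds (Φd i x)) :=
    ((hΦd i hij).1 x hx).mono (fun y hy => hy.1)
  have hdupU : ∀ (y : Fin (i + 1) → ℚ_[p]), (∀ m, y m ∈ U) →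
      ∀ (nn : Fin (i + 1)) (m : Fin (i + 2)), dup nn y m ∈ U := by
    intro y hy nn m
    simp only [KT.dup]
    split_ifs <;> exact hy _
  have hR : Filter.Tendsto (fun y : Fin (i + 1) → ℚ_[p] => ∑ nn : Fin (i + 1), Φg (i + 1) (dup nn y))
      (nhdsWithin x S₂) (nhds (∑ nn : Fin (i + 1), Φg (i + 1) (dup nn x))) := by
    apply tendsto_finset_sum
    intro nn _
    have hdupc : Continuous (fun y : Fin (i + 1) → ℚ_[p] => dup nn y) := by
      apply continuous_pi
      intro m
      by_cases h : (m : ℕ) ≤ (nn : ℕ)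
      · simpa only [KT.dup, dif_pos h] using continuous_apply _
      · simpa only [KT.dup, dif_neg h] using continuous_apply _
    have hp : Filter.Tendsto (fun y : Fin (i + 1) → ℚ_[p] => dup nn y) (nhdsWithin x S₂)
        (nhdsWithin (dup nn x) {z : Fin (i + 2) → ℚ_[p] | ∀ m, z m ∈ U}) := by
      rw [tendsto_nhdsWithin_iff]
      exact ⟨(hdupc.tendsto x).mono_left nhdsWithin_le_nhds,
        eventually_nhdsWithin_of_forall fun y hy => hdupU y hy.1 nn⟩
    exact Filter.Tendsto.comp ((hΦg (i + 1) (by omega)).1 _ (hdupU x hx nn)) hp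
  have key : ∀ᶠ y in nhdsWithin x S₂, Φd i y = ∑ nn : Fin (i + 1), Φg (i + 1) (dup nn y) := by
    filter_upwards [self_mem_nhdsWithin] with y hy
    have h1 : Φd i y = phi1 (fun t => Φg 1 (fun _ => t)) i y :=
      (hΦd i hij).2 y hy.1 hy.2
    have h2 : phi1 (fun t => Φg 1 (fun _ => t)) i y =
        ∑ n, Φg 1 (fun _ => y n) * (∏ m ∈ Finset.univ.erase n, (y n - y m))⁻¹ := rfl
    rw [h1, h2]
    exact S17.stage1 hU g (hΦg 0 (by omega)) (hΦg 1 (by omega)) (hΦg (i + 1) (by omega))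
      y hy.1 hy.2
  exact tendsto_nhds_unique (Filter.Tendsto.congr' key hL) hR
end
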